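/- arXiv:2511.10778 — 5 statements merged into one kernel-verified Lean document; each statement's English description precedes it below -/
import Mathlib

section
/- For every compactly supported smooth function h : ℝ → ℂ and every t ∈ ℝ, one has ∫_0^∞ | (h(t+s) − h(t−s)) / s |² ds ≤ 16 · ∫_ℝ |h'(x)|² dx. -/
open MeasureTheory
open scoped ENNReal

open Set intervalIntegral in

-- A1: integral of |u|^(-1/2) on 0..s
lemma aux_abs_rpow_int (s : ℝ) (hs : 0 ≤ s) :
    IntervalIntegrable (fun u : ℝ => |u| ^ (-(1/2) : ℝ)) volume 0 s ∧
    ∫ u in (0:ℝ)..s, |u| ^ (-(1/2) : ℝ) = 2 * s ^ ((1/2) : ℝ) := by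
  have heq : Set.EqOn (fun u : ℝ => |u| ^ (-(1/2) : ℝ)) (fun u : ℝ => u ^ (-(1/2) : ℝ))
      (Set.uIcc 0 s) := by
    intro u hu
    rw [Set.uIcc_of_le hs] at hu
    simp only [abs_of_nonneg hu.1]
  have hii : IntervalIntegrable (fun u : ℝ => u ^ (-(1/2) : ℝ)) volume 0 s :=
    intervalIntegral.intervalIntegrable_rpow' (by norm_num)
  constructor
  · exact hii.congr_ae (Filter.EventuallyEq.symm (by
      filter_upwards [ae_restrict_mem measurableSet_uIoc] with u hu
      exact heq (uIoc_subset_uIcc hu)))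
  · rw [intervalIntegral.integral_congr heq, integral_rpow (Or.inl (by norm_num))]
    rw [Real.zero_rpow (by norm_num)]
    norm_num
    ring

-- A: symmetric interval
lemma aux_abs_rpow_sym (s : ℝ) (hs : 0 ≤ s) :
    IntervalIntegrable (fun u : ℝ => |u| ^ (-(1/2) : ℝ)) volume (-s) s ∧
    ∫ u in (-s:ℝ)..s, |u| ^ (-(1/2) : ℝ) = 4 * s ^ ((1/2) : ℝ) := by
  obtain ⟨hi, hv⟩ := aux_abs_rpow_int s hs
  have hneg : IntervalIntegrable (fun u : ℝ => |u| ^ (-(1/2) : ℝ)) volume (-s) 0 := by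
    have := ((IntervalIntegrable.iff_comp_neg (by simp)).mp hi)
    have := this.symm
    simpa [abs_neg, neg_zero] using this
  have hvneg : ∫ u in (-s:ℝ)..(0:ℝ), |u| ^ (-(1/2) : ℝ) = 2 * s ^ ((1/2) : ℝ) := by
    have : ∫ u in (-s:ℝ)..(0:ℝ), |(-u)| ^ (-(1/2) : ℝ) = ∫ u in (-0:ℝ)..(-(-s):ℝ), |u| ^ (-(1/2):ℝ) :=
      intervalIntegral.integral_comp_neg (fun u => |u| ^ (-(1/2) : ℝ))
    simp only [abs_neg, neg_zero, neg_neg] at this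
    rw [this, hv]
  refine ⟨hneg.trans hi, ?_⟩
  rw [← intervalIntegral.integral_add_adjacent_intervals hneg hi, hv, hvneg]
  ring

-- C: lintegral of weight over shifted interval
lemma aux_weight_lintegral (t s : ℝ) (hs : 0 < s) :
    ∫⁻ x in Set.Ioc (t - s) (t + s), ENNReal.ofReal (|x - t| ^ (-(1/2) : ℝ))
      = ENNReal.ofReal (4 * s ^ ((1/2) : ℝ)) := by
  obtain ⟨hi, hv⟩ := aux_abs_rpow_sym s hs.le
  have hle : t - s ≤ t + s := by linarith
  have hi' : IntervalIntegrable (fun x : ℝ => |x - t| ^ (-(1/2) : ℝ)) volume (t - s) (t + s) := by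
    have := hi.comp_sub_right t
    simpa [sub_add_cancel, neg_add_eq_sub, add_comm, ← sub_eq_add_neg] using this
  have hv' : ∫ x in (t-s)..(t+s), |x - t| ^ (-(1/2) : ℝ) = 4 * s ^ ((1/2) : ℝ) := by
    have := intervalIntegral.integral_comp_sub_right (fun u : ℝ => |u| ^ (-(1/2) : ℝ)) t
      (a := t - s) (b := t + s)
    rw [this]
    simpa using hv
  have hion : IntegrableOn (fun x : ℝ => |x - t| ^ (-(1/2) : ℝ)) (Set.Ioc (t-s) (t+s)) volume := by
    rw [intervalIntegrable_iff] at hi'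
    rwa [Set.uIoc_of_le hle] at hi'
  rw [← ofReal_integral_eq_lintegral_ofReal hion
    (by filter_upwards [ae_restrict_mem measurableSet_Ioc] with x _ using
      Real.rpow_nonneg (abs_nonneg _) _),
    ← intervalIntegral.integral_of_le hle, hv']

-- D: tail integral
lemma aux_tail_lintegral (c : ℝ) (hc : 0 < c) :
    ∫⁻ s in Set.Ioi c, ENNReal.ofReal (4 * s ^ (-(3/2) : ℝ))
      = ENNReal.ofReal (8 * c ^ (-(1/2) : ℝ)) := by
  have hint : IntegrableOn (fun s : ℝ => s ^ (-(3/2) : ℝ)) (Set.Ioi c) volume :=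
    integrableOn_Ioi_rpow_of_lt (by norm_num) hc
  have hint4 : IntegrableOn (fun s : ℝ => 4 * s ^ (-(3/2) : ℝ)) (Set.Ioi c) volume :=
    hint.const_mul 4
  rw [← ofReal_integral_eq_lintegral_ofReal hint4
    (by filter_upwards [ae_restrict_mem measurableSet_Ioi] with x hx using
      mul_nonneg (by norm_num) (Real.rpow_nonneg (hc.trans hx).le _))]
  rw [MeasureTheory.integral_const_mul, integral_Ioi_rpow_of_lt (by norm_num) hc]
  congr 1
  have : (-(3/2) : ℝ) + 1 = -(1/2) := by norm_num
  rw [this]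
  ring

-- CS: weighted Cauchy-Schwarz
lemma aux_CS (t s : ℝ) (hs : 0 < s) (φ : ℝ → ℝ≥0∞) (hφ : Measurable φ) :
    (∫⁻ x in Set.Ioc (t-s) (t+s), φ x) ^ 2
      ≤ ENNReal.ofReal (4 * s ^ ((1/2) : ℝ)) *
        ∫⁻ x in Set.Ioc (t-s) (t+s), ENNReal.ofReal (|x - t| ^ ((1/2) : ℝ)) * φ x ^ 2 := by
  set μs := volume.restrict (Set.Ioc (t-s) (t+s)) with hμs
  set f : ℝ → ℝ≥0∞ := fun x => (ENNReal.ofReal (|x - t| ^ (-(1/2) : ℝ))) ^ ((1/2) : ℝ) with hf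
  set g : ℝ → ℝ≥0∞ := fun x => (ENNReal.ofReal (|x - t| ^ ((1/2) : ℝ))) ^ ((1/2) : ℝ) * φ x
    with hg
  have hfm : Measurable f := by fun_prop
  have hgm : Measurable g := by fun_prop
  -- a.e. equality f*g = φ
  have hae : ∀ᵐ x ∂μs, (f * g) x = φ x := by
    have hz0 : ∀ᵐ x : ℝ ∂ volume, x ≠ t := by
      rw [ae_iff]
      simpa using measure_singleton t
    have hz : ∀ᵐ x : ℝ ∂ μs, x ≠ t := by
      rw [hμs]; exact ae_mono Measure.restrict_le_self hz0
    filter_upwards [hz] with x hx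
    have hd : (0:ℝ) < |x - t| := abs_pos.mpr (sub_ne_zero.mpr hx)
    simp only [Pi.mul_apply, hf, hg]
    rw [← mul_assoc, ← ENNReal.mul_rpow_of_nonneg _ _ (by norm_num : (0:ℝ) ≤ 1/2),
      ← ENNReal.ofReal_mul (Real.rpow_nonneg (abs_nonneg _) _),
      ← Real.rpow_add hd]
    norm_num
  have hCS := ENNReal.lintegral_mul_le_Lp_mul_Lq μs
    (Real.HolderConjugate.two_two : (2:ℝ).HolderConjugate 2) hfm.aemeasurable hgm.aemeasurable
  rw [lintegral_congr_ae hae] at hCS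
  -- compute ∫ f^2
  have hf2 : ∫⁻ x, f x ^ (2:ℝ) ∂μs = ENNReal.ofReal (4 * s ^ ((1/2) : ℝ)) := by
    have hfx : ∀ x, f x ^ (2:ℝ) = ENNReal.ofReal (|x - t| ^ (-(1/2) : ℝ)) := by
      intro x
      simp only [hf, ← ENNReal.rpow_mul]
      norm_num
    simp only [hfx]
    exact aux_weight_lintegral t s hs
  -- compute ∫ g^2
  have hg2 : ∫⁻ x, g x ^ (2:ℝ) ∂μs
      = ∫⁻ x in Set.Ioc (t-s) (t+s), ENNReal.ofReal (|x - t| ^ ((1/2) : ℝ)) * φ x ^ 2 := by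
    rw [hμs]
    refine lintegral_congr fun x => ?_
    simp only [hg]
    rw [ENNReal.mul_rpow_of_nonneg _ _ (by norm_num : (0:ℝ) ≤ 2), ← ENNReal.rpow_mul,
      ← ENNReal.rpow_natCast (φ x) 2]
    norm_num
  rw [hf2, hg2] at hCS
  calc (∫⁻ x in Set.Ioc (t-s) (t+s), φ x) ^ 2
      ≤ ((ENNReal.ofReal (4 * s ^ ((1/2) : ℝ))) ^ ((1:ℝ)/2) *
        (∫⁻ x in Set.Ioc (t-s) (t+s), ENNReal.ofReal (|x - t| ^ ((1/2) : ℝ)) * φ x ^ 2)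
          ^ ((1:ℝ)/2)) ^ 2 := by
        exact pow_le_pow_left' hCS 2
    _ = _ := by
        rw [mul_pow, ← ENNReal.rpow_natCast (_ ^ ((1:ℝ)/2)) 2, ← ENNReal.rpow_natCast
          ((∫⁻ x in Set.Ioc (t-s) (t+s), ENNReal.ofReal (|x - t| ^ ((1/2) : ℝ)) * φ x ^ 2)
            ^ ((1:ℝ)/2)) 2, ← ENNReal.rpow_mul, ← ENNReal.rpow_mul]
        norm_num
        rfl

-- inner s-integral for fixed x
lemma aux_inner (t x : ℝ) (hx : x ≠ t) (c : ℝ≥0∞) (hc : c ≠ ∞) :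
    ∫⁻ s in Set.Ioi (0:ℝ), ENNReal.ofReal (4 * s ^ (-(3/2) : ℝ)) *
        (Set.Ioc (t - s) (t + s)).indicator (fun _ => c) x
      = ENNReal.ofReal (8 * |x - t| ^ (-(1/2) : ℝ)) * c := by
  set d := |x - t| with hd
  have hd0 : 0 < d := abs_pos.mpr (sub_ne_zero.mpr hx)
  have hne : ∀ᵐ s : ℝ ∂ volume.restrict (Set.Ioi (0:ℝ)), s ≠ d := by
    have hvol : ∀ᵐ s : ℝ ∂ volume, s ≠ d := by
      rw [ae_iff]; simpa using measure_singleton d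
    exact ae_mono Measure.restrict_le_self hvol
  have hcong : ∀ᵐ s : ℝ ∂ volume.restrict (Set.Ioi (0:ℝ)),
      ENNReal.ofReal (4 * s ^ (-(3/2) : ℝ)) *
        (Set.Ioc (t - s) (t + s)).indicator (fun _ => c) x
      = (Set.Ioi d).indicator (fun s => ENNReal.ofReal (4 * s ^ (-(3/2) : ℝ)) * c) s := by
    filter_upwards [hne] with s hs
    by_cases hmem : d < s
    · have h1 : t - s < x ∧ x ≤ t + s := by
        have := abs_sub_lt_iff.mp (hd ▸ hmem : |x - t| < s)
        constructor <;> linarith [this.1, this.2]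
      simp [Set.indicator_apply, Set.mem_Ioc, Set.mem_Ioi, h1.1, h1.2, hmem]
    · have h1 : ¬ (t - s < x ∧ x ≤ t + s) := by
        rintro ⟨ha, hb⟩
        have hle : d ≤ s := abs_le.mpr ⟨by linarith, by linarith⟩
        exact hmem (lt_of_le_of_ne hle (Ne.symm hs))
      have h1' : ¬ (t - s < x) ∨ ¬ (x ≤ t + s) := not_and_or.mp h1
      rcases h1' with h' | h' <;>
        simp [Set.indicator_apply, Set.mem_Ioc, Set.mem_Ioi, h', hmem]
  rw [lintegral_congr_ae hcong, lintegral_indicator measurableSet_Ioi,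
    Measure.restrict_restrict measurableSet_Ioi,
    Set.inter_eq_left.mpr (Set.Ioi_subset_Ioi hd0.le),
    lintegral_mul_const' c _ hc, aux_tail_lintegral d hd0]


open Set intervalIntegral in
/-- Square-integral bound for the symmetric difference quotient:
`∫_0^∞ |(h(t+s) − h(t−s))/s|² ds ≤ 16 ∫ |h'|²`. -/
theorem stmt5 (h : ℝ → ℂ) (hsm : ContDiff ℝ (⊤ : ℕ∞) h) (hsupp : HasCompactSupport h)
    (t : ℝ) :
    ∫⁻ s in Set.Ioi (0 : ℝ), (‖(h (t + s) - h (t - s)) / (s : ℂ)‖₊ : ℝ≥0∞) ^ 2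
      ≤ 16 * ∫⁻ x : ℝ, (‖deriv h x‖₊ : ℝ≥0∞) ^ 2 := by
  classical
  set φ : ℝ → ℝ≥0∞ := fun x => (‖deriv h x‖₊ : ℝ≥0∞) with hφdef
  have hderiv_cont : Continuous (deriv h) := hsm.continuous_deriv (by exact_mod_cast le_top)
  have hφm : Measurable φ := hderiv_cont.measurable.nnnorm.coe_nnreal_ennreal
  set G : ℝ → ℝ≥0∞ := fun x => ENNReal.ofReal (|x - t| ^ ((1/2) : ℝ)) * φ x ^ 2 with hGdef
  have hGm : Measurable G := by fun_prop
  have hGne : ∀ x, G x ≠ ∞ := fun x =>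
    ENNReal.mul_ne_top ENNReal.ofReal_ne_top (by simp [hφdef])
  -- pointwise bound
  have step1 : ∀ s : ℝ, 0 < s →
      (‖(h (t + s) - h (t - s)) / (s : ℂ)‖₊ : ℝ≥0∞) ^ 2
        ≤ ENNReal.ofReal (4 * s ^ (-(3/2) : ℝ)) * ∫⁻ x in Set.Ioc (t - s) (t + s), G x := by
    intro s hs
    have hle : t - s ≤ t + s := by linarith
    have hftc : h (t + s) - h (t - s) = ∫ x in (t - s)..(t + s), deriv h x := by
      rw [intervalIntegral.integral_deriv_eq_sub
        (fun x _ => (hsm.differentiable (by simp)).differentiableAt)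
        (hderiv_cont.intervalIntegrable _ _)]
    have hnorm : (‖h (t + s) - h (t - s)‖₊ : ℝ≥0∞) ≤ ∫⁻ x in Set.Ioc (t - s) (t + s), φ x := by
      rw [hftc, intervalIntegral.integral_of_le hle]
      exact enorm_integral_le_lintegral_enorm _
    have hdiv : (‖(h (t + s) - h (t - s)) / (s : ℂ)‖₊ : ℝ≥0∞)
        = (‖h (t + s) - h (t - s)‖₊ : ℝ≥0∞) * (ENNReal.ofReal s)⁻¹ := by
      rw [nnnorm_div, ENNReal.coe_div (by simpa using hs.ne' : ‖(s:ℂ)‖₊ ≠ 0),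
        div_eq_mul_inv]
      congr 2
      rw [Complex.nnnorm_real]
      exact Real.enorm_eq_ofReal hs.le
    have hfact : (ENNReal.ofReal s)⁻¹ ^ 2 * ENNReal.ofReal (4 * s ^ ((1/2) : ℝ))
        = ENNReal.ofReal (4 * s ^ (-(3/2) : ℝ)) := by
      rw [← ENNReal.ofReal_inv_of_pos hs, ← ENNReal.ofReal_pow (inv_nonneg.mpr hs.le),
        ← ENNReal.ofReal_mul (by positivity)]
      congr 1
      rw [← Real.rpow_neg_one s, ← Real.rpow_natCast (s ^ ((-1:ℝ))) 2,
        ← Real.rpow_mul hs.le]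
      rw [mul_comm (s ^ ((-1) * ((2:ℕ):ℝ))), mul_assoc, ← Real.rpow_add hs]
      norm_num
    calc (‖(h (t + s) - h (t - s)) / (s : ℂ)‖₊ : ℝ≥0∞) ^ 2
        = ((‖h (t + s) - h (t - s)‖₊ : ℝ≥0∞) * (ENNReal.ofReal s)⁻¹) ^ 2 := by rw [hdiv]
      _ ≤ ((∫⁻ x in Set.Ioc (t - s) (t + s), φ x) * (ENNReal.ofReal s)⁻¹) ^ 2 :=
          pow_le_pow_left' (mul_le_mul_left hnorm _) 2
      _ = (ENNReal.ofReal s)⁻¹ ^ 2 * (∫⁻ x in Set.Ioc (t - s) (t + s), φ x) ^ 2 := by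
          rw [mul_pow, mul_comm]
      _ ≤ (ENNReal.ofReal s)⁻¹ ^ 2 * (ENNReal.ofReal (4 * s ^ ((1/2) : ℝ)) *
            ∫⁻ x in Set.Ioc (t - s) (t + s), G x) :=
          mul_le_mul_right (aux_CS t s hs φ hφm) _
      _ = _ := by rw [← mul_assoc, hfact]
  calc ∫⁻ s in Set.Ioi (0 : ℝ), (‖(h (t + s) - h (t - s)) / (s : ℂ)‖₊ : ℝ≥0∞) ^ 2
      ≤ ∫⁻ s in Set.Ioi (0 : ℝ), ENNReal.ofReal (4 * s ^ (-(3/2) : ℝ)) *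
          ∫⁻ x in Set.Ioc (t - s) (t + s), G x := by
        refine lintegral_mono_ae ?_
        filter_upwards [ae_restrict_mem measurableSet_Ioi] with s hs
        exact step1 s hs
    _ = ∫⁻ s in Set.Ioi (0 : ℝ), ∫⁻ x, ENNReal.ofReal (4 * s ^ (-(3/2) : ℝ)) *
          (Set.Ioc (t - s) (t + s)).indicator G x := by
        refine lintegral_congr fun s => ?_
        rw [← lintegral_indicator measurableSet_Ioc,
          ← lintegral_const_mul' _ _ ENNReal.ofReal_ne_top]
    _ = ∫⁻ x, ∫⁻ s in Set.Ioi (0 : ℝ), ENNReal.ofReal (4 * s ^ (-(3/2) : ℝ)) *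
          (Set.Ioc (t - s) (t + s)).indicator G x := by
        apply lintegral_lintegral_swap
        have hE : MeasurableSet {p : ℝ × ℝ | t - p.1 < p.2 ∧ p.2 ≤ t + p.1} :=
          (measurableSet_lt (measurable_const.sub measurable_fst) measurable_snd).inter
            (measurableSet_le measurable_snd (measurable_const.add measurable_fst))
        have heq : (Function.uncurry fun s x => ENNReal.ofReal (4 * s ^ (-(3/2) : ℝ)) *
              (Set.Ioc (t - s) (t + s)).indicator G x)
            = fun p : ℝ × ℝ => ENNReal.ofReal (4 * p.1 ^ (-(3/2) : ℝ)) *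
              ({p : ℝ × ℝ | t - p.1 < p.2 ∧ p.2 ≤ t + p.1}).indicator (fun q => G q.2) p := by
          ext p
          simp only [Function.uncurry]
          congr 1
        rw [heq]
        exact ((by fun_prop : Measurable fun p : ℝ × ℝ =>
          ENNReal.ofReal (4 * p.1 ^ (-(3/2) : ℝ))).mul
          ((hGm.comp measurable_snd).indicator hE)).aemeasurable
    _ = ∫⁻ x, 8 * φ x ^ 2 := by
        have hzt : ∀ᵐ x : ℝ ∂ volume, x ≠ t := by
          rw [ae_iff]; simpa using measure_singleton t
        refine lintegral_congr_ae ?_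
        filter_upwards [hzt] with x hx
        have hind : ∀ s : ℝ, (Set.Ioc (t - s) (t + s)).indicator G x
            = (Set.Ioc (t - s) (t + s)).indicator (fun _ => G x) x := fun s => by
          simp [Set.indicator_apply]
        simp only [hind]
        rw [aux_inner t x hx (G x) (hGne x)]
        have hd0 : (0:ℝ) < |x - t| := abs_pos.mpr (sub_ne_zero.mpr hx)
        rw [hGdef]
        rw [← mul_assoc, ← ENNReal.ofReal_mul (by positivity)]
        rw [mul_assoc (8:ℝ), ← Real.rpow_add hd0]
        norm_num
    _ = 8 * ∫⁻ x, φ x ^ 2 := lintegral_const_mul' 8 _ (by norm_num)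
    _ ≤ 16 * ∫⁻ x, φ x ^ 2 := mul_le_mul_left (by norm_num) _
end

section
/- Let d ≥ 1 and β > 0, and let M(v) = (β/(2π))^{d/2} exp(−β|v|²/2) be the Maxwellian density on ℝ^d. Then for every ω ∈ ℂ with Re ω > 0, every k ∈ ℝ^d with k ≠ 0, and every v₀ ∈ ℝ^d, one has | ∫_{ℝ^d} M(v) / (ω + i k·(v − v₀)) dv | ≤ e^{β/2} / |k|. -/
open MeasureTheory
open scoped ENNReal RealInnerProductSpace
open Set

/-- The Maxwellian density `M(v) = (β/(2π))^{d/2} exp(−β|v|²/2)` on `ℝ^d`. -/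
noncomputable def maxwellian (d : ℕ) (β : ℝ) (v : EuclideanSpace ℝ (Fin d)) : ℝ :=
  (β / (2 * Real.pi)) ^ ((d : ℝ) / 2) * Real.exp (-β * ‖v‖ ^ 2 / 2)


lemma aux_integrableOn_cexp_neg {z : ℂ} (hz : 0 < z.re) :
    IntegrableOn (fun s : ℝ => Complex.exp (-(s : ℂ) * z)) (Ioi (0:ℝ)) := by
  apply Integrable.mono' (exp_neg_integrableOn_Ioi 0 hz)
  · exact (Complex.continuous_exp.comp ((Complex.continuous_ofReal.neg).mul
      continuous_const)).aestronglyMeasurable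
  · filter_upwards with s
    simp [Complex.norm_exp, mul_comm]

lemma aux_integral_cexp_neg_Ioi {z : ℂ} (hz : 0 < z.re) :
    ∫ s in Ioi (0:ℝ), Complex.exp (-(s : ℂ) * z) = 1 / z := by
  have hz0 : z ≠ 0 := fun h => by simp [h] at hz
  have hderiv : ∀ s ∈ Ici (0:ℝ), HasDerivAt (fun s : ℝ => -Complex.exp (-(s:ℂ) * z) / z)
      (Complex.exp (-(s:ℂ) * z)) s := by
    intro s _
    have h1 : HasDerivAt (fun s : ℝ => -(s:ℂ) * z) (-z) s := by
      simpa using ((Complex.ofRealCLM.hasDerivAt (x := s)).neg.mul_const z)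
    have := (h1.cexp.neg.div_const z)
    convert this using 1
    · rfl
    · rfl
    · field_simp
  have htend : Filter.Tendsto (fun s : ℝ => -Complex.exp (-(s:ℂ) * z) / z)
      Filter.atTop (nhds 0) := by
    rw [tendsto_zero_iff_norm_tendsto_zero]
    have : (fun s : ℝ => ‖-Complex.exp (-(s:ℂ) * z) / z‖)
        = fun s : ℝ => Real.exp (-(s * z.re)) / ‖z‖ := by
      funext s
      simp [Complex.norm_exp, norm_div]
    rw [this]
    simpa using ((Real.tendsto_exp_neg_atTop_nhds_zero.comp
      (Filter.tendsto_id.atTop_mul_const hz)).div_const ‖z‖)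
  have := integral_Ioi_of_hasDerivAt_of_tendsto' hderiv (aux_integrableOn_cexp_neg hz) htend
  rw [this]
  simp [neg_div]

lemma aux_integrable_maxwellian (d : ℕ) {β : ℝ} (hβ : 0 < β) : Integrable (maxwellian d β) := by
  have h := (GaussianFourier.integrable_cexp_neg_mul_sq_norm_add
      (V := EuclideanSpace ℝ (Fin d)) (b := ((β/2 : ℝ) : ℂ)) (by simpa using half_pos hβ) 0 0).norm
  have h2 : Integrable (fun v : EuclideanSpace ℝ (Fin d) => Real.exp (-β * ‖v‖^2 / 2)) := by
    refine h.congr (Filter.Eventually.of_forall fun v => ?_)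
    simp [Complex.norm_exp, ← Complex.ofReal_pow]
    ring_nf
  exact h2.const_mul ((β / (2 * Real.pi)) ^ ((d : ℝ) / 2))

/-- Phase-mixing bound for the averaged free-transport resolvent against a Maxwellian:
`|∫ M(v)/(ω + i k·(v−v₀)) dv| ≤ e^{β/2}/|k|`, uniformly in `Re ω > 0` and `v₀`. -/
theorem stmt7 (d : ℕ) (hd : 1 ≤ d) (β : ℝ) (hβ : 0 < β) (ω : ℂ) (hω : 0 < ω.re)
    (k : EuclideanSpace ℝ (Fin d)) (hk : k ≠ 0) (v₀ : EuclideanSpace ℝ (Fin d)) :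
    ‖∫ v, (maxwellian d β v : ℂ) / (ω + Complex.I * ((⟪k, v - v₀⟫ : ℝ) : ℂ))‖
      ≤ Real.exp (β / 2) / ‖k‖ := by
  have hK : 0 < ‖k‖ := norm_pos_iff.mpr hk
  have hπ : (0:ℝ) < Real.pi := Real.pi_pos
  have hβ0 : (β:ℂ) ≠ 0 := by exact_mod_cast hβ.ne'
  have hM := aux_integrable_maxwellian d hβ
  have hMpos : ∀ v : EuclideanSpace ℝ (Fin d), 0 < maxwellian d β v := fun v => by
    unfold maxwellian; positivity
  have hzre : ∀ v : EuclideanSpace ℝ (Fin d),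
      (ω + Complex.I * ((⟪k, v - v₀⟫ : ℝ) : ℂ)).re = ω.re := fun v => by simp
  -- Step 1: Laplace representation of the resolvent
  have key : ∀ v : EuclideanSpace ℝ (Fin d),
      (maxwellian d β v : ℂ) / (ω + Complex.I * ((⟪k, v - v₀⟫ : ℝ) : ℂ)) =
      ∫ s in Ioi (0:ℝ), (maxwellian d β v : ℂ) *
        Complex.exp (-(s:ℂ) * (ω + Complex.I * ((⟪k, v - v₀⟫ : ℝ) : ℂ))) := by
    intro v
    rw [integral_const_mul, aux_integral_cexp_neg_Ioi (by rw [hzre]; exact hω), mul_one_div]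
  simp only [key]
  -- Step 2: Fubini
  have hint : Integrable (Function.uncurry fun (v : EuclideanSpace ℝ (Fin d)) (s : ℝ) =>
      (maxwellian d β v : ℂ) *
        Complex.exp (-(s:ℂ) * (ω + Complex.I * ((⟪k, v - v₀⟫ : ℝ) : ℂ))))
      (volume.prod (volume.restrict (Ioi 0))) := by
    apply Integrable.mono' (hM.mul_prod (exp_neg_integrableOn_Ioi 0 hω))
    · apply Continuous.aestronglyMeasurable
      have hMc : Continuous (maxwellian d β) := by
        unfold maxwellian; fun_prop
      have hic : Continuous fun p : (EuclideanSpace ℝ (Fin d)) × ℝ => (⟪k, p.1 - v₀⟫ : ℝ) :=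
        Continuous.inner continuous_const (continuous_fst.sub continuous_const)
      apply Continuous.mul
      · exact Complex.continuous_ofReal.comp (hMc.comp continuous_fst)
      · apply Complex.continuous_exp.comp
        apply Continuous.mul (by fun_prop)
        apply Continuous.add continuous_const
        apply Continuous.mul continuous_const
        exact Complex.continuous_ofReal.comp hic
    · filter_upwards with p
      rcases p with ⟨v, s⟩
      simp only [Function.uncurry, norm_mul, Complex.norm_real]
      rw [Real.norm_eq_abs, abs_of_pos (hMpos v)]
      apply le_of_eq
      congr 1
      rw [Complex.norm_exp]
      congr 1
      simp [hzre]  -- hope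
      ring
  rw [integral_integral_swap hint]
  -- Step 3: inner Gaussian Fourier integral
  have hb : 0 < (((β/2 : ℝ)):ℂ).re := by simpa using half_pos hβ
  have hconst : ((((β/(2*Real.pi))^((d:ℝ)/2) : ℝ)) : ℂ) *
      ((Real.pi : ℂ)/((β/2:ℝ):ℂ))^((Module.finrank ℝ (EuclideanSpace ℝ (Fin d)) : ℂ)/2) = 1 := by
    rw [finrank_euclideanSpace_fin]
    have h1 : ((Real.pi : ℂ)/((β/2:ℝ):ℂ)) = ((2*Real.pi/β : ℝ) : ℂ) := by
      push_cast
      field_simp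
    have h2 : ((d:ℂ))/2 = (((d:ℝ)/2 : ℝ) : ℂ) := by push_cast; ring
    rw [h1, h2, ← Complex.ofReal_cpow (by positivity), ← Complex.ofReal_mul,
      ← Real.mul_rpow (by positivity) (by positivity)]
    have h3 : β/(2*Real.pi) * (2*Real.pi/β) = 1 := by field_simp
    rw [h3, Real.one_rpow, Complex.ofReal_one]
  have inner_eq : ∀ s : ℝ,
      (∫ v : EuclideanSpace ℝ (Fin d), (maxwellian d β v : ℂ) *
        Complex.exp (-(s:ℂ) * (ω + Complex.I * ((⟪k, v - v₀⟫ : ℝ) : ℂ)))) =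
      Complex.exp (-(s:ℂ)*ω + (s:ℂ)*Complex.I*((⟪k, v₀⟫ : ℝ):ℂ)) *
        ((Real.exp (-(‖k‖^2/(2*β))*s^2) : ℝ) : ℂ) := by
    intro s
    have base := GaussianFourier.integral_cexp_neg_mul_sq_norm_add
      (V := EuclideanSpace ℝ (Fin d)) hb (-Complex.I*(s:ℂ)) k
    have step1 : (∫ v : EuclideanSpace ℝ (Fin d), (maxwellian d β v : ℂ) *
        Complex.exp (-(s:ℂ) * (ω + Complex.I * ((⟪k, v - v₀⟫ : ℝ) : ℂ)))) =
        (((β/(2*Real.pi))^((d:ℝ)/2) : ℝ) : ℂ) *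
          Complex.exp (-(s:ℂ)*ω + (s:ℂ)*Complex.I*((⟪k, v₀⟫ : ℝ):ℂ)) *
        ∫ v : EuclideanSpace ℝ (Fin d),
          Complex.exp (-(((β/2:ℝ)):ℂ) * (‖v‖:ℂ)^2 + (-Complex.I*(s:ℂ)) * ((⟪k, v⟫ : ℝ):ℂ)) := by
      rw [← integral_const_mul]
      congr 1
      funext v
      unfold maxwellian
      rw [inner_sub_right]
      push_cast
      rw [mul_assoc, ← Complex.exp_add, mul_assoc, ← Complex.exp_add]
      congr 2
      ring
    rw [step1, base]
    have hexpB : (-Complex.I*(s:ℂ))^2*((‖k‖:ℝ):ℂ)^2/(4*(((β/2:ℝ)):ℂ)) =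
        ((-(‖k‖^2/(2*β))*s^2 : ℝ) : ℂ) := by
      have hI : (-Complex.I*(s:ℂ))^2 = -(s:ℂ)^2 := by
        rw [mul_pow]
        simp [Complex.I_sq]
      have h4 : (4:ℂ)*(((β/2:ℝ)):ℂ) = 2*(β:ℂ) := by push_cast; ring
      rw [hI, h4]
      push_cast
      ring
    rw [hexpB, mul_mul_mul_comm, hconst, one_mul, ← Complex.ofReal_exp]
  simp only [inner_eq]
  have hbpos : 0 < ‖k‖^2/(2*β) := by positivity
  have h1 : ‖∫ s in Ioi (0:ℝ), Complex.exp (-(s:ℂ)*ω + (s:ℂ)*Complex.I*((⟪k, v₀⟫:ℝ):ℂ)) *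
      ((Real.exp (-(‖k‖^2/(2*β))*s^2) : ℝ):ℂ)‖
      ≤ ∫ s in Ioi (0:ℝ), Real.exp (-(‖k‖^2/(2*β))*s^2) := by
    apply norm_integral_le_of_norm_le ((integrable_exp_neg_mul_sq hbpos).integrableOn)
    filter_upwards [ae_restrict_mem measurableSet_Ioi] with s hs
    rw [norm_mul, Complex.norm_real, Real.norm_eq_abs, abs_of_pos (Real.exp_pos _)]
    have hre : ‖Complex.exp (-(s:ℂ)*ω + (s:ℂ)*Complex.I*((⟪k, v₀⟫:ℝ):ℂ))‖
        = Real.exp (-(s*ω.re)) := by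
      rw [Complex.norm_exp]
      congr 1
      simp [Complex.add_re, Complex.mul_re, Complex.mul_im]
    rw [hre]
    have h2 : Real.exp (-(s*ω.re)) ≤ 1 :=
      Real.exp_le_one_iff.mpr (by nlinarith [le_of_lt (Set.mem_Ioi.mp hs), hω])
    calc Real.exp (-(s*ω.re)) * Real.exp (-(‖k‖^2/(2*β))*s^2)
        ≤ 1 * Real.exp (-(‖k‖^2/(2*β))*s^2) :=
          mul_le_mul_of_nonneg_right h2 (Real.exp_pos _).le
      _ = Real.exp (-(‖k‖^2/(2*β))*s^2) := one_mul _
  refine le_trans h1 ?_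
  rw [integral_gaussian_Ioi]
  have h5 : Real.pi/(‖k‖^2/(2*β)) = 2*Real.pi*β/‖k‖^2 := by
    field_simp
  rw [h5, Real.sqrt_div' _ (sq_nonneg ‖k‖), Real.sqrt_sq hK.le]
  have h6 : Real.sqrt (2*Real.pi*β) ≤ 2*Real.exp (β/2) := by
    have e1 : (2*Real.exp (β/2))^2 = 4*Real.exp β := by
      rw [mul_pow, show Real.exp (β/2)^2 = Real.exp β from by
        rw [pow_two, ← Real.exp_add, add_halves]]
      norm_num
    have hexpe : Real.exp 1 * β ≤ Real.exp β := by
      have h7 := Real.add_one_le_exp (β-1)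
      calc Real.exp 1 * β ≤ Real.exp 1 * Real.exp (β-1) :=
            mul_le_mul_of_nonneg_left (by linarith) (Real.exp_pos 1).le
        _ = Real.exp β := by rw [← Real.exp_add]; ring_nf
    have h2e : (2:ℝ) ≤ Real.exp 1 := by linarith [Real.add_one_le_exp (1:ℝ)]
    have e2 : 2*Real.pi*β ≤ (2*Real.exp (β/2))^2 := by
      rw [e1]
      nlinarith [Real.pi_le_four, hβ.le, Real.exp_pos β]
    calc Real.sqrt (2*Real.pi*β) ≤ Real.sqrt ((2*Real.exp (β/2))^2) := Real.sqrt_le_sqrt e2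
      _ = 2*Real.exp (β/2) := Real.sqrt_sq (by positivity)
  rw [div_right_comm]
  gcongr
  linarith [h6]
end

section
/- Fix integers m ≥ 0, n ≥ 1, and d ≥ 1. Let (s_i, a_i, b_i)_{1≤i≤n} be a history in the following sense: s_i ∈ {+1, −1}, a_i, b_i ∈ ℕ, and with the index sets ω_i ⊆ ℕ defined by ω₀ = {0, 1, …, m} and ω_i = ω_{i−1} ∪ {b_i} if s_i = +1, ω_i = ω_{i−1} ∖ {b_i} if s_i = −1, we require: if s_i = +1 then a_i ∈ ω_{i−1} and b_i = 1 + max(m, a₁, b₁, …, a_{i−1}, b_{i−1}); if s_i = −1 then a_i ∈ ω_{i−1} and b_i ∈ ω_{i−1} ∖ {a_i, 0}. Set S := m + #{i : s_i = +1} (so every created index b_i with s_i = +1 lies in {m+1, …, S}). Given vectors k₁, …, k_S ∈ ℝ^d, define wave vectors q_j^i ∈ ℝ^d for 0 ≤ i ≤ n and 0 ≤ j ≤ S by: q₀⁰ = −Σ_{j=1}^m k_j, q_j⁰ = k_j for 1 ≤ j ≤ m, q_j⁰ = 0 for m < j ≤ S; and for 1 ≤ i ≤ n: if s_i = +1 then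 q_{a_i}^i = q_{a_i}^{i−1} − k_{b_i}, q_{b_i}^i = k_{b_i}, and q_j^i = q_j^{i−1} for j ∉ {a_i, b_i}; if s_i = −1 then q_{a_i}^i = q_{a_i}^{i−1} + q_{b_i}^{i−1}, q_{b_i}^i = 0, and q_j^i = q_j^{i−1} for j ∉ {a_i, b_i}. Then there exist signs σ_{j,ℓ} ∈ {+1, −1} (for 0 ≤ j ≤ S, 1 ≤ ℓ ≤ S) and coefficients c_{j,ℓ}^i ∈ {0, 1} (for 0 ≤ i ≤ n, 0 ≤ j ≤ S, 1 ≤ ℓ ≤ S), depending only on the history and not on the vectors k_ℓ, such that for every choice of k₁, …, k_S ∈ ℝ^d and all 0 ≤ i ≤ n, 0 ≤ j ≤ S: q_j^i = Σ_{ℓ=1}^S σ_{j,ℓ} · c_{j,ℓ}^i · k_ℓ. -/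
open MeasureTheory
open scoped ENNReal

namespace Stmt16Aux

/-- Integer coefficient of `k ℓ` in the wave vector `q i j`, defined by the same
recursion as the wave vectors themselves. -/
def Q (m : ℕ) (s : ℕ → ℤ) (a b : ℕ → ℕ) : ℕ → ℕ → ℕ → ℤ
  | 0 => fun j ℓ =>
      if j = 0 then (if 1 ≤ ℓ ∧ ℓ ≤ m then -1 else 0)
      else if j ≤ m ∧ ℓ = j then 1 else 0
  | (i+1) => fun j ℓ =>
      if s (i+1) = 1 then
        if j = b (i+1) then (if ℓ = b (i+1) then 1 else 0)
        else if j = a (i+1) then Q m s a b i j ℓ - (if ℓ = b (i+1) then 1 else 0)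
        else Q m s a b i j ℓ
      else
        if j = b (i+1) then 0
        else if j = a (i+1) then Q m s a b i j ℓ + Q m s a b i (b (i+1)) ℓ
        else Q m s a b i j ℓ

lemma Q_zero (m : ℕ) (s : ℕ → ℤ) (a b : ℕ → ℕ) (j ℓ : ℕ) :
    Q m s a b 0 j ℓ =
      if j = 0 then (if 1 ≤ ℓ ∧ ℓ ≤ m then -1 else 0)
      else if j ≤ m ∧ ℓ = j then 1 else 0 := rfl

lemma Q_succ (m : ℕ) (s : ℕ → ℤ) (a b : ℕ → ℕ) (i j ℓ : ℕ) :
    Q m s a b (i+1) j ℓ =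
      if s (i+1) = 1 then
        if j = b (i+1) then (if ℓ = b (i+1) then 1 else 0)
        else if j = a (i+1) then Q m s a b i j ℓ - (if ℓ = b (i+1) then 1 else 0)
        else Q m s a b i j ℓ
      else
        if j = b (i+1) then 0
        else if j = a (i+1) then Q m s a b i j ℓ + Q m s a b i (b (i+1)) ℓ
        else Q m s a b i j ℓ := rfl

/-- `Mx i` is the largest particle index seen up to time `i`. -/
def Mx (m : ℕ) (a b : ℕ → ℕ) (i : ℕ) : ℕ :=
  max m ((Finset.Icc 1 i).sup fun j => max (a j) (b j))

/-- number of creations up to time `i`. -/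
def cnt (s : ℕ → ℤ) (i : ℕ) : ℕ := ((Finset.Icc 1 i).filter fun t => s t = 1).card

/-- the momentum variable `k ℓ` has already entered the dynamics by time `i`. -/
def Created (m : ℕ) (s : ℕ → ℤ) (b : ℕ → ℕ) (ℓ i : ℕ) : Prop :=
  ℓ ≤ m ∨ ∃ t, 1 ≤ t ∧ t ≤ i ∧ s t = 1 ∧ b t = ℓ

lemma Mx_mono (m : ℕ) (a b : ℕ → ℕ) {i i' : ℕ} (h : i ≤ i') :
    Mx m a b i ≤ Mx m a b i' :=
  max_le (le_max_left _ _)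
    (le_trans (Finset.sup_mono (Finset.Icc_subset_Icc_right h)) (le_max_right _ _))

lemma le_Mx (m : ℕ) (a b : ℕ → ℕ) {t i : ℕ} (h1 : 1 ≤ t) (h2 : t ≤ i) :
    a t ≤ Mx m a b i ∧ b t ≤ Mx m a b i := by
  have ht : t ∈ Finset.Icc 1 i := Finset.mem_Icc.2 ⟨h1, h2⟩
  have := Finset.le_sup (f := fun j => max (a j) (b j)) ht
  constructor
  · exact le_trans (le_trans (le_max_left _ _) this) (le_max_right _ _)
  · exact le_trans (le_trans (le_max_right _ _) this) (le_max_right _ _)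

lemma m_le_Mx (m : ℕ) (a b : ℕ → ℕ) (i : ℕ) : m ≤ Mx m a b i := le_max_left _ _

lemma Mx_succ (m : ℕ) (a b : ℕ → ℕ) (i : ℕ) :
    Mx m a b (i+1) = max (Mx m a b i) (max (a (i+1)) (b (i+1))) := by
  unfold Mx
  rw [← Finset.insert_Icc_right_eq_Icc_add_one (by omega : 1 ≤ i + 1), Finset.sup_insert]
  simp [max_comm, max_left_comm, max_assoc]

lemma cnt_succ_pos (s : ℕ → ℤ) (i : ℕ) (h : s (i+1) = 1) :
    cnt s (i+1) = cnt s i + 1 := by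
  unfold cnt
  rw [← Finset.insert_Icc_right_eq_Icc_add_one (by omega : 1 ≤ i + 1), Finset.filter_insert, if_pos h,
    Finset.card_insert_of_notMem]
  intro hmem
  have := Finset.mem_of_mem_filter _ hmem
  simp at this

lemma cnt_succ_neg (s : ℕ → ℤ) (i : ℕ) (h : s (i+1) = -1) :
    cnt s (i+1) = cnt s i := by
  unfold cnt
  rw [← Finset.insert_Icc_right_eq_Icc_add_one (by omega : 1 ≤ i + 1), Finset.filter_insert, if_neg]
  rw [h]; decide

lemma cnt_mono (s : ℕ → ℤ) {i i' : ℕ} (h : i ≤ i') : cnt s i ≤ cnt s i' :=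
  Finset.card_le_card (Finset.filter_subset_filter _ (Finset.Icc_subset_Icc_right h))

lemma Created_mono (m : ℕ) (s : ℕ → ℤ) (b : ℕ → ℕ) {ℓ i i' : ℕ} (h : i ≤ i')
    (hc : Created m s b ℓ i) : Created m s b ℓ i' := by
  rcases hc with hc | ⟨t, h1, h2, h3, h4⟩
  · exact Or.inl hc
  · exact Or.inr ⟨t, h1, le_trans h2 h, h3, h4⟩

end Stmt16Aux

/-- Structure of the wave vectors along a collision history: each `q_j^i` is a signed
`{0,1}`-combination of the momentum variables `k₁, …, k_S`, with signs depending only on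
the pair `(j, ℓ)` and not on the time index `i`. -/
theorem stmt16 (d m n : ℕ) (hd : 1 ≤ d) (hn : 1 ≤ n)
    (s : ℕ → ℤ) (a b : ℕ → ℕ) (ω : ℕ → Finset ℕ)
    (hs : ∀ i ∈ Finset.Icc 1 n, s i = 1 ∨ s i = -1)
    (hω0 : ω 0 = Finset.range (m + 1))
    (hωrec : ∀ i ∈ Finset.Icc 1 n,
      (s i = 1 → ω i = insert (b i) (ω (i - 1))) ∧
      (s i = -1 → ω i = (ω (i - 1)).erase (b i)))
    (hcreate : ∀ i ∈ Finset.Icc 1 n, s i = 1 →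
      a i ∈ ω (i - 1) ∧
      b i = 1 + max m ((Finset.Icc 1 (i - 1)).sup fun j => max (a j) (b j)))
    (hannih : ∀ i ∈ Finset.Icc 1 n, s i = -1 →
      a i ∈ ω (i - 1) ∧ b i ∈ ω (i - 1) ∧ b i ≠ a i ∧ b i ≠ 0)
    (S : ℕ) (hS : S = m + ((Finset.Icc 1 n).filter fun i => s i = 1).card)
    (q : (ℕ → EuclideanSpace ℝ (Fin d)) → ℕ → ℕ → EuclideanSpace ℝ (Fin d))
    (hq00 : ∀ k, q k 0 0 = -∑ j ∈ Finset.Icc 1 m, k j)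
    (hq0mid : ∀ k, ∀ j ∈ Finset.Icc 1 m, q k 0 j = k j)
    (hq0top : ∀ k j, m < j → j ≤ S → q k 0 j = 0)
    (hqrec : ∀ k, ∀ i ∈ Finset.Icc 1 n,
      (s i = 1 →
        q k i (a i) = q k (i - 1) (a i) - k (b i) ∧ q k i (b i) = k (b i)) ∧
      (s i = -1 →
        q k i (a i) = q k (i - 1) (a i) + q k (i - 1) (b i) ∧ q k i (b i) = 0) ∧
      (∀ j ≤ S, j ≠ a i → j ≠ b i → q k i j = q k (i - 1) j)) :
    ∃ (σ : ℕ → ℕ → ℤ) (c : ℕ → ℕ → ℕ → ℕ),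
      (∀ j ℓ, σ j ℓ = 1 ∨ σ j ℓ = -1) ∧
      (∀ i j ℓ, c i j ℓ = 0 ∨ c i j ℓ = 1) ∧
      ∀ k, ∀ i ≤ n, ∀ j ≤ S,
        q k i j = ∑ ℓ ∈ Finset.Icc 1 S, ((σ j ℓ * (c i j ℓ : ℤ) : ℤ) : ℝ) • k ℓ := by
  classical
  set Qc := Stmt16Aux.Q m s a b with hQc
  set Mx := Stmt16Aux.Mx m a b with hMx
  set cnt := Stmt16Aux.cnt s with hcnt
  set Created := Stmt16Aux.Created m s b with hCr
  -- basic bookkeeping lemmas specialized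
  have hMxmono : ∀ {i i' : ℕ}, i ≤ i' → Mx i ≤ Mx i' := fun h => Stmt16Aux.Mx_mono m a b h
  have hleMx : ∀ {t i : ℕ}, 1 ≤ t → t ≤ i → a t ≤ Mx i ∧ b t ≤ Mx i :=
    fun h1 h2 => Stmt16Aux.le_Mx m a b h1 h2
  have hmMx : ∀ i, m ≤ Mx i := fun i => Stmt16Aux.m_le_Mx m a b i
  have hCmono : ∀ {ℓ i i' : ℕ}, i ≤ i' → Created ℓ i → Created ℓ i' :=
    fun h hc => Stmt16Aux.Created_mono m s b h hc
  have hMsucc : ∀ i, Mx (i+1) = max (Mx i) (max (a (i+1)) (b (i+1))) :=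
    fun i => Stmt16Aux.Mx_succ m a b i
  -- ω is contained in the indices seen so far
  have hωM : ∀ i ≤ n, ∀ j ∈ ω i, j ≤ Mx i := by
    intro i
    induction i with
    | zero =>
      intro _ j hj
      rw [hω0, Finset.mem_range] at hj
      exact le_trans (by omega) (hmMx 0)
    | succ i ih =>
      intro hin j hj
      have hi : i ≤ n := by omega
      have hmem : i + 1 ∈ Finset.Icc 1 n := Finset.mem_Icc.2 ⟨by omega, hin⟩
      have hstep : Mx i ≤ Mx (i+1) := hMxmono (by omega)
      rcases hs _ hmem with hs1 | hs2
      · rw [(hωrec _ hmem).1 hs1, Finset.mem_insert] at hj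
        simp only [Nat.add_sub_cancel] at hj
        rcases hj with hj | hj
        · subst hj; exact (hleMx (by omega) (le_refl (i+1))).2
        · exact le_trans (ih hi j hj) hstep
      · rw [(hωrec _ hmem).2 hs2] at hj
        simp only [Nat.add_sub_cancel] at hj
        exact le_trans (ih hi j (Finset.mem_of_mem_erase hj)) hstep
  -- Mx is bounded by m + number of creations
  have hMcnt : ∀ i ≤ n, Mx i ≤ m + cnt i := by
    intro i
    induction i with
    | zero =>
      intro _
      have : Mx 0 = m := by
        simp [hMx, Stmt16Aux.Mx]
      omega
    | succ i ih =>
      intro hin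
      have hi : i ≤ n := by omega
      have hmem : i + 1 ∈ Finset.Icc 1 n := Finset.mem_Icc.2 ⟨by omega, hin⟩
      rcases hs _ hmem with hs1 | hs2
      · have hb : b (i+1) = 1 + Mx i := by
          have := (hcreate _ hmem hs1).2
          simpa [hMx, Stmt16Aux.Mx, Nat.add_sub_cancel] using this
        have ha : a (i+1) ≤ Mx i := by
          have := (hcreate _ hmem hs1).1
          simp only [Nat.add_sub_cancel] at this
          exact hωM i hi _ this
        have hcnt1 : cnt (i+1) = cnt i + 1 := Stmt16Aux.cnt_succ_pos s i hs1
        rw [hMsucc i, hcnt1]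
        have := ih hi
        simp only [sup_le_iff]
        omega
      · have ha : a (i+1) ≤ Mx i := by
          have := (hannih _ hmem hs2).1
          simp only [Nat.add_sub_cancel] at this
          exact hωM i hi _ this
        have hb : b (i+1) ≤ Mx i := by
          have := (hannih _ hmem hs2).2.1
          simp only [Nat.add_sub_cancel] at this
          exact hωM i hi _ this
        have hcnt1 : cnt (i+1) = cnt i := Stmt16Aux.cnt_succ_neg s i hs2
        rw [hMsucc i, hcnt1]
        have := ih hi
        simp only [sup_le_iff]
        omega
  have hScnt : S = m + cnt n := hS
  have hmS : m ≤ S := by omega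
  have hMS : ∀ i ≤ n, Mx i ≤ S := by
    intro i hi
    have h1 := hMcnt i hi
    have h2 : cnt i ≤ cnt n := Stmt16Aux.cnt_mono s hi
    omega
  -- support: nonzero coefficients only at live particles
  have hsupp : ∀ i ≤ n, ∀ j ℓ, Qc i j ℓ ≠ 0 → j ∈ ω i := by
    intro i
    induction i with
    | zero =>
      intro _ j ℓ h
      rw [hω0, Finset.mem_range]
      by_cases hj0 : j = 0
      · omega
      · rw [hQc, Stmt16Aux.Q_zero, if_neg hj0] at h
        by_cases hc : j ≤ m ∧ ℓ = j
        · omega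
        · rw [if_neg hc] at h; exact absurd rfl h
    | succ i ih =>
      intro hin j ℓ h
      have hi : i ≤ n := by omega
      have hmem : i + 1 ∈ Finset.Icc 1 n := Finset.mem_Icc.2 ⟨by omega, hin⟩
      rcases hs _ hmem with hs1 | hs2
      · have hQ1 : ∀ j ℓ, Qc (i+1) j ℓ =
            if j = b (i+1) then (if ℓ = b (i+1) then 1 else 0)
            else if j = a (i+1) then Qc i j ℓ - (if ℓ = b (i+1) then 1 else 0)
            else Qc i j ℓ := by
          intro j ℓ; rw [hQc, Stmt16Aux.Q_succ, if_pos hs1]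
        have ha1 : a (i+1) ∈ ω i := by
          have := (hcreate _ hmem hs1).1; simpa [Nat.add_sub_cancel] using this
        have hω1 : ω (i+1) = insert (b (i+1)) (ω i) := by
          have := (hωrec _ hmem).1 hs1; simpa [Nat.add_sub_cancel] using this
        rw [hω1]
        rw [hQ1] at h
        by_cases hjB : j = b (i+1)
        · rw [hjB]; exact Finset.mem_insert_self _ _
        · rw [if_neg hjB] at h
          by_cases hjA : j = a (i+1)
          · rw [hjA]; exact Finset.mem_insert_of_mem ha1
          · rw [if_neg hjA] at h
            exact Finset.mem_insert_of_mem (ih hi j ℓ h)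
      · have hQ2 : ∀ j ℓ, Qc (i+1) j ℓ =
            if j = b (i+1) then 0
            else if j = a (i+1) then Qc i j ℓ + Qc i (b (i+1)) ℓ
            else Qc i j ℓ := by
          intro j ℓ; rw [hQc, Stmt16Aux.Q_succ, if_neg (by rw [hs2]; decide)]
        have ha2 : a (i+1) ∈ ω i := by
          have := (hannih _ hmem hs2).1; simpa [Nat.add_sub_cancel] using this
        have hba : b (i+1) ≠ a (i+1) := (hannih _ hmem hs2).2.2.1
        have hω2 : ω (i+1) = (ω i).erase (b (i+1)) := by
          have := (hωrec _ hmem).2 hs2; simpa [Nat.add_sub_cancel] using this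
        rw [hω2]
        rw [hQ2] at h
        by_cases hjB : j = b (i+1)
        · rw [if_pos hjB] at h; exact absurd rfl h
        · rw [if_neg hjB] at h
          by_cases hjA : j = a (i+1)
          · rw [hjA]; exact Finset.mem_erase.2 ⟨Ne.symm hba, ha2⟩
          · rw [if_neg hjA] at h
            exact Finset.mem_erase.2 ⟨hjB, ih hi j ℓ h⟩
  -- any nonzero coefficient of k ℓ certifies that ℓ has been created
  have hcreated : ∀ i ≤ n, ∀ j ℓ, Qc i j ℓ ≠ 0 → Created ℓ i := by
    intro i
    induction i with
    | zero =>
      intro _ j ℓ h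
      rw [hQc, Stmt16Aux.Q_zero] at h
      by_cases hj0 : j = 0
      · rw [if_pos hj0] at h
        by_cases hc : 1 ≤ ℓ ∧ ℓ ≤ m
        · exact Or.inl hc.2
        · rw [if_neg hc] at h; exact absurd rfl h
      · rw [if_neg hj0] at h
        by_cases hc : j ≤ m ∧ ℓ = j
        · exact Or.inl (hc.2 ▸ hc.1)
        · rw [if_neg hc] at h; exact absurd rfl h
    | succ i ih =>
      intro hin j ℓ h
      have hi : i ≤ n := by omega
      have hmem : i + 1 ∈ Finset.Icc 1 n := Finset.mem_Icc.2 ⟨by omega, hin⟩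
      rcases hs _ hmem with hs1 | hs2
      · have hQ1 : ∀ j ℓ, Qc (i+1) j ℓ =
            if j = b (i+1) then (if ℓ = b (i+1) then 1 else 0)
            else if j = a (i+1) then Qc i j ℓ - (if ℓ = b (i+1) then 1 else 0)
            else Qc i j ℓ := by
          intro j ℓ; rw [hQc, Stmt16Aux.Q_succ, if_pos hs1]
        rw [hQ1] at h
        by_cases hℓB : ℓ = b (i+1)
        · exact Or.inr ⟨i+1, by omega, le_refl _, hs1, hℓB.symm⟩
        · by_cases hjB : j = b (i+1)
          · rw [if_pos hjB, if_neg hℓB] at h; exact absurd rfl h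
          · rw [if_neg hjB] at h
            by_cases hjA : j = a (i+1)
            · rw [if_pos hjA, if_neg hℓB, sub_zero] at h
              exact hCmono (by omega) (ih hi j ℓ h)
            · rw [if_neg hjA] at h
              exact hCmono (by omega) (ih hi j ℓ h)
      · have hQ2 : ∀ j ℓ, Qc (i+1) j ℓ =
            if j = b (i+1) then 0
            else if j = a (i+1) then Qc i j ℓ + Qc i (b (i+1)) ℓ
            else Qc i j ℓ := by
          intro j ℓ; rw [hQc, Stmt16Aux.Q_succ, if_neg (by rw [hs2]; decide)]
        rw [hQ2] at h
        by_cases hjB : j = b (i+1)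
        · rw [if_pos hjB] at h; exact absurd rfl h
        · rw [if_neg hjB] at h
          by_cases hjA : j = a (i+1)
          · rw [if_pos hjA] at h
            by_cases hA0 : Qc i j ℓ = 0
            · rw [hA0, zero_add] at h
              exact hCmono (by omega) (ih hi (b (i+1)) ℓ h)
            · exact hCmono (by omega) (ih hi j ℓ hA0)
          · rw [if_neg hjA] at h
            exact hCmono (by omega) (ih hi j ℓ h)
  -- freshness of the created index, packaged
  have hfresh : ∀ i, i + 1 ≤ n → s (i+1) = 1 → ∀ i₀ ≤ i, ∀ j ℓ,
      Qc i₀ j ℓ ≠ 0 → ℓ ≠ b (i+1) := by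
    intro i hin hs1 i₀ hi₀ j ℓ h hℓB
    have hmem : i + 1 ∈ Finset.Icc 1 n := Finset.mem_Icc.2 ⟨by omega, hin⟩
    have hb1 : b (i+1) = 1 + Mx i := by
      have := (hcreate _ hmem hs1).2
      simpa [hMx, Stmt16Aux.Mx, Nat.add_sub_cancel] using this
    have hc : Created ℓ i₀ := hcreated i₀ (by omega) j ℓ h
    rcases hc with hc | ⟨t, ht1, ht2, ht3, ht4⟩
    · have := hmMx i; omega
    · have hbt : b t ≤ Mx i := (hleMx ht1 (by omega)).2
      omega
  -- shape: for every ℓ, the coefficients of k ℓ are all zero, or exactly one +1 and one -1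
  have hshape : ∀ i ≤ n, ∀ ℓ,
      (∀ j, Qc i j ℓ = 0) ∨
      ∃ p r, p ≠ r ∧ Qc i p ℓ = 1 ∧ Qc i r ℓ = -1 ∧
        ∀ j, j ≠ p → j ≠ r → Qc i j ℓ = 0 := by
    intro i
    induction i with
    | zero =>
      intro _ ℓ
      by_cases hℓ : 1 ≤ ℓ ∧ ℓ ≤ m
      · right
        refine ⟨ℓ, 0, by omega, ?_, ?_, ?_⟩
        · rw [hQc, Stmt16Aux.Q_zero, if_neg (by omega), if_pos ⟨hℓ.2, rfl⟩]
        · rw [hQc, Stmt16Aux.Q_zero, if_pos rfl, if_pos hℓ]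
        · intro j hjℓ hj0
          rw [hQc, Stmt16Aux.Q_zero, if_neg hj0, if_neg (fun hc => hjℓ hc.2.symm)]
      · left; intro j
        rw [hQc, Stmt16Aux.Q_zero]
        by_cases hj0 : j = 0
        · rw [if_pos hj0, if_neg hℓ]
        · rw [if_neg hj0, if_neg ?_]
          rintro ⟨h1, rfl⟩
          exact hℓ ⟨by omega, h1⟩
    | succ i ih =>
      intro hin ℓ
      have hi : i ≤ n := by omega
      have hmem : i + 1 ∈ Finset.Icc 1 n := Finset.mem_Icc.2 ⟨by omega, hin⟩
      rcases hs _ hmem with hs1 | hs2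
      · have hQ1 : ∀ j ℓ, Qc (i+1) j ℓ =
            if j = b (i+1) then (if ℓ = b (i+1) then 1 else 0)
            else if j = a (i+1) then Qc i j ℓ - (if ℓ = b (i+1) then 1 else 0)
            else Qc i j ℓ := by
          intro j ℓ; rw [hQc, Stmt16Aux.Q_succ, if_pos hs1]
        have hb1 : b (i+1) = 1 + Mx i := by
          have := (hcreate _ hmem hs1).2
          simpa [hMx, Stmt16Aux.Mx, Nat.add_sub_cancel] using this
        have ha1 : a (i+1) ∈ ω i := by
          have := (hcreate _ hmem hs1).1; simpa [Nat.add_sub_cancel] using this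
        have hBnotω : b (i+1) ∉ ω i := by
          intro hB; have := hωM i hi _ hB; omega
        have hABne : a (i+1) ≠ b (i+1) := by
          intro h; exact hBnotω (h ▸ ha1)
        by_cases hℓB : ℓ = b (i+1)
        · -- k ℓ is created right now
          have hpre : ∀ j, Qc i j ℓ = 0 := by
            intro j
            by_contra h
            exact hfresh i hin hs1 i (le_refl i) j ℓ h hℓB
          right
          refine ⟨b (i+1), a (i+1), Ne.symm hABne, ?_, ?_, ?_⟩
          · rw [hQ1, if_pos rfl, if_pos hℓB]
          · rw [hQ1, if_neg hABne, if_pos rfl, hpre (a (i+1)), if_pos hℓB]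
            norm_num
          · intro j hjp hjr
            rw [hQ1, if_neg hjp, if_neg hjr]
            exact hpre j
        · -- nothing changes for this ℓ
          have heq : ∀ j, Qc (i+1) j ℓ = Qc i j ℓ := by
            intro j
            rw [hQ1]
            by_cases hjB : j = b (i+1)
            · rw [if_pos hjB, if_neg hℓB]
              have hz : Qc i (b (i+1)) ℓ = 0 := by
                by_contra h; exact hBnotω (hsupp i hi _ _ h)
              rw [hjB, hz]
            · rw [if_neg hjB]
              by_cases hjA : j = a (i+1)
              · rw [if_pos hjA, if_neg hℓB, sub_zero]
              · rw [if_neg hjA]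
          rcases ih hi ℓ with h | ⟨p, r, hpr, hp, hr, hrest⟩
          · left; intro j; rw [heq j]; exact h j
          · right
            exact ⟨p, r, hpr, by rw [heq]; exact hp, by rw [heq]; exact hr,
              fun j h1 h2 => by rw [heq]; exact hrest j h1 h2⟩
      · have hQ2 : ∀ j ℓ, Qc (i+1) j ℓ =
            if j = b (i+1) then 0
            else if j = a (i+1) then Qc i j ℓ + Qc i (b (i+1)) ℓ
            else Qc i j ℓ := by
          intro j ℓ; rw [hQc, Stmt16Aux.Q_succ, if_neg (by rw [hs2]; decide)]
        have hba : b (i+1) ≠ a (i+1) := (hannih _ hmem hs2).2.2.1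
        rcases ih hi ℓ with h | ⟨p, r, hpr, hp, hr, hrest⟩
        · left; intro j
          rw [hQ2]
          by_cases hjB : j = b (i+1)
          · rw [if_pos hjB]
          · rw [if_neg hjB]
            by_cases hjA : j = a (i+1)
            · rw [if_pos hjA, h, h, add_zero]
            · rw [if_neg hjA]; exact h j
        · by_cases hBp : b (i+1) = p
          · by_cases hAr : a (i+1) = r
            · -- +1 and -1 merge and cancel
              left; intro j
              rw [hQ2]
              by_cases hjB : j = b (i+1)
              · rw [if_pos hjB]
              · rw [if_neg hjB]
                by_cases hjA : j = a (i+1)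
                · rw [if_pos hjA, hjA, hAr, hBp, hr, hp]; norm_num
                · rw [if_neg hjA]
                  exact hrest j (fun h' => hjB (by rw [h', ← hBp])) (fun h' => hjA (by rw [h', ← hAr]))
            · -- the +1 moves from b(i+1)=p to a(i+1)
              right
              refine ⟨a (i+1), r, hAr, ?_, ?_, ?_⟩
              · rw [hQ2, if_neg (Ne.symm hba), if_pos rfl]
                have hAp : a (i+1) ≠ p := fun h' => (Ne.symm hba) (h'.trans hBp.symm)
                rw [hrest _ hAp hAr, hBp, hp]; norm_num
              · rw [hQ2, if_neg (fun h' : r = b (i+1) => hpr (by rw [hBp] at h'; exact h'.symm)),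
                  if_neg (fun h' => hAr h'.symm)]
                exact hr
              · intro j hjA hjr
                rw [hQ2]
                by_cases hjB : j = b (i+1)
                · rw [if_pos hjB]
                · rw [if_neg hjB, if_neg hjA]
                  exact hrest j (fun h' => hjB (h'.trans hBp.symm)) hjr
          · by_cases hBr : b (i+1) = r
            · by_cases hAp : a (i+1) = p
              · -- merge and cancel
                left; intro j
                rw [hQ2]
                by_cases hjB : j = b (i+1)
                · rw [if_pos hjB]
                · rw [if_neg hjB]
                  by_cases hjA : j = a (i+1)
                  · rw [if_pos hjA, hjA, hAp, hBr, hp, hr]; norm_num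
                  · rw [if_neg hjA]
                    exact hrest j (fun h' => hjA (h'.trans hAp.symm)) (fun h' => hjB (h'.trans hBr.symm))
              · -- the -1 moves from b(i+1)=r to a(i+1)
                right
                refine ⟨p, a (i+1), fun h' => hAp h'.symm, ?_, ?_, ?_⟩
                · rw [hQ2, if_neg (fun h' : p = b (i+1) => hpr (h'.trans hBr)),
                    if_neg (fun h' => hAp h'.symm)]
                  exact hp
                · rw [hQ2, if_neg (Ne.symm hba), if_pos rfl]
                  have hAr : a (i+1) ≠ r := fun h' => (Ne.symm hba) (h'.trans hBr.symm)
                  rw [hrest _ hAp hAr, hBr, hr]; norm_num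
                · intro j hjp hjA
                  rw [hQ2]
                  by_cases hjB : j = b (i+1)
                  · rw [if_pos hjB]
                  · rw [if_neg hjB, if_neg hjA]
                    exact hrest j hjp (fun h' => hjB (h'.trans hBr.symm))
            · -- b(i+1) carries coefficient 0
              have hvB : Qc i (b (i+1)) ℓ = 0 := hrest _ hBp hBr
              right
              refine ⟨p, r, hpr, ?_, ?_, ?_⟩
              · rw [hQ2, if_neg (fun h' : p = b (i+1) => hBp h'.symm)]
                by_cases hpA : p = a (i+1)
                · rw [if_pos hpA, hvB, add_zero]; exact hp
                · rw [if_neg hpA]; exact hp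
              · rw [hQ2, if_neg (fun h' : r = b (i+1) => hBr h'.symm)]
                by_cases hrA : r = a (i+1)
                · rw [if_pos hrA, hvB, add_zero]; exact hr
                · rw [if_neg hrA]; exact hr
              · intro j hjp hjr
                rw [hQ2]
                by_cases hjB : j = b (i+1)
                · rw [if_pos hjB]
                · rw [if_neg hjB]
                  by_cases hjA : j = a (i+1)
                  · rw [if_pos hjA, hvB, add_zero]; exact hrest j hjp hjr
                  · rw [if_neg hjA]; exact hrest j hjp hjr
  -- monotonicity: once a coefficient is nonzero, it keeps its value until it dies
  have hmono : ∀ i ≤ n, ∀ ℓ, ∀ i₀ ≤ i, ∀ j, Qc i₀ j ℓ ≠ 0 →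
      Qc i j ℓ = Qc i₀ j ℓ ∨
      (Qc i j ℓ = 0 ∧ (j ∉ ω i ∨ ∀ j', Qc i j' ℓ = 0)) := by
    intro i
    induction i with
    | zero =>
      intro _ ℓ i₀ hi₀ j hj
      have : i₀ = 0 := by omega
      subst this
      exact Or.inl rfl
    | succ i ih =>
      intro hin ℓ i₀ hi₀ j hj
      have hi : i ≤ n := by omega
      have hmem : i + 1 ∈ Finset.Icc 1 n := Finset.mem_Icc.2 ⟨by omega, hin⟩
      by_cases hi₀' : i₀ = i + 1
      · subst hi₀'; exact Or.inl rfl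
      · have hi₀i : i₀ ≤ i := by omega
        have hi₀n : i₀ ≤ n := by omega
        rcases hs _ hmem with hs1 | hs2
        · have hQ1 : ∀ j ℓ, Qc (i+1) j ℓ =
              if j = b (i+1) then (if ℓ = b (i+1) then 1 else 0)
              else if j = a (i+1) then Qc i j ℓ - (if ℓ = b (i+1) then 1 else 0)
              else Qc i j ℓ := by
            intro j ℓ; rw [hQc, Stmt16Aux.Q_succ, if_pos hs1]
          have hb1 : b (i+1) = 1 + Mx i := by
            have := (hcreate _ hmem hs1).2
            simpa [hMx, Stmt16Aux.Mx, Nat.add_sub_cancel] using this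
          have hω1 : ω (i+1) = insert (b (i+1)) (ω i) := by
            have := (hωrec _ hmem).1 hs1; simpa [Nat.add_sub_cancel] using this
          have hℓB : ℓ ≠ b (i+1) := hfresh i hin hs1 i₀ hi₀i j ℓ hj
          have hjB : j ≠ b (i+1) := by
            have h1 : j ≤ Mx i₀ := hωM i₀ hi₀n j (hsupp i₀ hi₀n j ℓ hj)
            have h2 : Mx i₀ ≤ Mx i := hMxmono hi₀i
            omega
          have heqj : ∀ j', j' ≠ b (i+1) → Qc (i+1) j' ℓ = Qc i j' ℓ := by
            intro j' hj'B
            rw [hQ1, if_neg hj'B]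
            by_cases hj'A : j' = a (i+1)
            · rw [if_pos hj'A, if_neg hℓB, sub_zero]
            · rw [if_neg hj'A]
          rcases ih hi ℓ i₀ hi₀i j hj with h | ⟨h0, hrest⟩
          · left; rw [heqj j hjB, h]
          · right
            refine ⟨by rw [heqj j hjB, h0], ?_⟩
            rcases hrest with hωj | hall
            · left
              rw [hω1]
              intro hmem'
              rcases Finset.mem_insert.1 hmem' with h' | h'
              · exact hjB h'
              · exact hωj h'
            · right
              intro j'
              by_cases hj'B : j' = b (i+1)
              · rw [hQ1, if_pos hj'B, if_neg hℓB]
              · rw [heqj j' hj'B]; exact hall j'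
        · have hQ2 : ∀ j ℓ, Qc (i+1) j ℓ =
              if j = b (i+1) then 0
              else if j = a (i+1) then Qc i j ℓ + Qc i (b (i+1)) ℓ
              else Qc i j ℓ := by
            intro j ℓ; rw [hQc, Stmt16Aux.Q_succ, if_neg (by rw [hs2]; decide)]
          have ha2 : a (i+1) ∈ ω i := by
            have := (hannih _ hmem hs2).1; simpa [Nat.add_sub_cancel] using this
          have hb2 : b (i+1) ∈ ω i := by
            have := (hannih _ hmem hs2).2.1; simpa [Nat.add_sub_cancel] using this
          have hba : b (i+1) ≠ a (i+1) := (hannih _ hmem hs2).2.2.1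
          have hω2 : ω (i+1) = (ω i).erase (b (i+1)) := by
            have := (hωrec _ hmem).2 hs2; simpa [Nat.add_sub_cancel] using this
          rcases ih hi ℓ i₀ hi₀i j hj with h | ⟨h0, hrest⟩
          · -- the value survived to time i
            have hjne : Qc i j ℓ ≠ 0 := by rw [h]; exact hj
            by_cases hjB : j = b (i+1)
            · right
              refine ⟨by rw [hQ2, if_pos hjB], Or.inl ?_⟩
              rw [hω2, hjB]
              exact Finset.notMem_erase _ _
            · by_cases hjA : j = a (i+1)
              · rcases hshape i hi ℓ with hall | ⟨p, r, hpr, hp, hr, hrest'⟩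
                · exact absurd (hall j) hjne
                · have hBnej : b (i+1) ≠ j := by rw [hjA]; exact hba
                  by_cases hjp : j = p
                  · by_cases hBr : b (i+1) = r
                    · -- merge and cancel: everything dies
                      have hall' : ∀ j', Qc (i+1) j' ℓ = 0 := by
                        intro j'
                        rw [hQ2]
                        by_cases hj'B : j' = b (i+1)
                        · rw [if_pos hj'B]
                        · rw [if_neg hj'B]
                          by_cases hj'A : j' = a (i+1)
                          · rw [if_pos hj'A, hj'A, ← hjA, hjp, hp, hBr, hr]; norm_num
                          · rw [if_neg hj'A]
                            exact hrest' j' (fun h' => hj'A (by rw [h', ← hjp, hjA]))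
                              (fun h' => hj'B (by rw [h', ← hBr]))
                      exact Or.inr ⟨hall' j, Or.inr hall'⟩
                    · have hvB : Qc i (b (i+1)) ℓ = 0 :=
                        hrest' _ (fun h' => hBnej (h'.trans hjp.symm)) hBr
                      left
                      rw [hQ2, if_neg hjB, if_pos hjA, hvB, add_zero]; exact h
                  · by_cases hjr : j = r
                    · by_cases hBp : b (i+1) = p
                      · have hall' : ∀ j', Qc (i+1) j' ℓ = 0 := by
                          intro j'
                          rw [hQ2]
                          by_cases hj'B : j' = b (i+1)
                          · rw [if_pos hj'B]
                          · rw [if_neg hj'B]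
                            by_cases hj'A : j' = a (i+1)
                            · rw [if_pos hj'A, hj'A, ← hjA, hjr, hr, hBp, hp]; norm_num
                            · rw [if_neg hj'A]
                              exact hrest' j' (fun h' => hj'B (by rw [h', ← hBp]))
                                (fun h' => hj'A (by rw [h', ← hjr, hjA]))
                        exact Or.inr ⟨hall' j, Or.inr hall'⟩
                      · have hvB : Qc i (b (i+1)) ℓ = 0 :=
                          hrest' _ hBp (fun h' => hBnej (h'.trans hjr.symm))
                        left
                        rw [hQ2, if_neg hjB, if_pos hjA, hvB, add_zero]; exact h
                    · exact absurd (hrest' j hjp hjr) hjne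
              · left
                rw [hQ2, if_neg hjB, if_neg hjA, h]
          · -- the value already died
            rcases hrest with hωj | hall
            · have hjA : j ≠ a (i+1) := fun h' => hωj (h' ▸ ha2)
              have hjB : j ≠ b (i+1) := fun h' => hωj (h' ▸ hb2)
              right
              refine ⟨by rw [hQ2, if_neg hjB, if_neg hjA]; exact h0, Or.inl ?_⟩
              rw [hω2]
              intro hmem'
              exact hωj (Finset.mem_of_mem_erase hmem')
            · have hall' : ∀ j', Qc (i+1) j' ℓ = 0 := by
                intro j'
                rw [hQ2]
                by_cases hj'B : j' = b (i+1)
                · rw [if_pos hj'B]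
                · rw [if_neg hj'B]
                  by_cases hj'A : j' = a (i+1)
                  · rw [if_pos hj'A, hall, hall, add_zero]
                  · rw [if_neg hj'A]; exact hall j'
              exact Or.inr ⟨hall' j, Or.inr hall'⟩
  -- coefficients take values in {0, 1, -1}
  have hrange : ∀ i ≤ n, ∀ j ℓ, Qc i j ℓ = 0 ∨ Qc i j ℓ = 1 ∨ Qc i j ℓ = -1 := by
    intro i hi j ℓ
    rcases hshape i hi ℓ with h | ⟨p, r, hpr, hp, hr, hrest⟩
    · exact Or.inl (h j)
    · by_cases hjp : j = p
      · subst hjp; exact Or.inr (Or.inl hp)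
      · by_cases hjr : j = r
        · subst hjr; exact Or.inr (Or.inr hr)
        · exact Or.inl (hrest j hjp hjr)
  -- a coefficient never takes both signs
  have hnosign : ∀ j ℓ, ∀ i ≤ n, ∀ i' ≤ n, Qc i j ℓ = 1 → Qc i' j ℓ = -1 → False := by
    intro j ℓ i hi i' hi' h1 h2
    rcases le_total i i' with h | h
    · rcases hmono i' hi' ℓ i h j (by rw [h1]; norm_num) with hh | hh
      · rw [h2, h1] at hh; norm_num at hh
      · rw [h2] at hh; norm_num at hh
    · rcases hmono i hi ℓ i' h j (by rw [h2]; norm_num) with hh | hh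
      · rw [h1, h2] at hh; norm_num at hh
      · rw [h1] at hh; norm_num at hh
  -- linearity: q is the Q-combination of the k's
  have hlin : ∀ k, ∀ i ≤ n, ∀ j ≤ S,
      q k i j = ∑ ℓ ∈ Finset.Icc 1 S, ((Qc i j ℓ : ℤ) : ℝ) • k ℓ := by
    intro k i
    induction i with
    | zero =>
      intro _ j hj
      by_cases hj0 : j = 0
      · subst hj0
        rw [hq00 k]
        have hc : ∀ ℓ ∈ Finset.Icc 1 S, ((Qc 0 0 ℓ : ℤ) : ℝ) • k ℓ =
            if ℓ ∈ Finset.Icc 1 m then -(k ℓ) else 0 := by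
          intro ℓ _
          rw [hQc, Stmt16Aux.Q_zero, if_pos rfl]
          by_cases hcc : 1 ≤ ℓ ∧ ℓ ≤ m
          · rw [if_pos hcc, if_pos (Finset.mem_Icc.2 hcc)]
            simp
          · rw [if_neg hcc, if_neg (fun hmm => hcc (Finset.mem_Icc.1 hmm))]
            simp
        rw [Finset.sum_congr rfl hc, Finset.sum_ite_mem,
          Finset.inter_eq_right.2 (Finset.Icc_subset_Icc_right hmS), Finset.sum_neg_distrib]
      · by_cases hjm : j ≤ m
        · have hj1 : 1 ≤ j := by omega
          rw [hq0mid k j (Finset.mem_Icc.2 ⟨hj1, hjm⟩)]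
          have hc : ∀ ℓ ∈ Finset.Icc 1 S, ((Qc 0 j ℓ : ℤ) : ℝ) • k ℓ =
              if ℓ = j then k ℓ else 0 := by
            intro ℓ _
            rw [hQc, Stmt16Aux.Q_zero, if_neg hj0]
            by_cases hcc : ℓ = j
            · rw [if_pos ⟨hjm, hcc⟩, if_pos hcc]; simp
            · rw [if_neg (fun hh => hcc hh.2), if_neg hcc]; simp
          rw [Finset.sum_congr rfl hc, Finset.sum_ite_eq' (Finset.Icc 1 S) j k,
            if_pos (Finset.mem_Icc.2 ⟨hj1, by omega⟩)]
        · rw [hq0top k j (by omega) hj]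
          symm
          apply Finset.sum_eq_zero
          intro ℓ _
          rw [hQc, Stmt16Aux.Q_zero, if_neg hj0, if_neg (fun hh => hjm hh.1)]
          simp
    | succ i ihl =>
      intro hin j hj
      have hi : i ≤ n := by omega
      have hmem : i + 1 ∈ Finset.Icc 1 n := Finset.mem_Icc.2 ⟨by omega, hin⟩
      have htriple := hqrec k (i+1) hmem
      simp only [Nat.add_sub_cancel] at htriple
      rcases hs _ hmem with hs1 | hs2
      · have hQ1 : ∀ j ℓ, Qc (i+1) j ℓ =
            if j = b (i+1) then (if ℓ = b (i+1) then 1 else 0)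
            else if j = a (i+1) then Qc i j ℓ - (if ℓ = b (i+1) then 1 else 0)
            else Qc i j ℓ := by
          intro j ℓ; rw [hQc, Stmt16Aux.Q_succ, if_pos hs1]
        have hb1 : b (i+1) = 1 + Mx i := by
          have := (hcreate _ hmem hs1).2
          simpa [hMx, Stmt16Aux.Mx, Nat.add_sub_cancel] using this
        have ha1 : a (i+1) ∈ ω i := by
          have := (hcreate _ hmem hs1).1; simpa [Nat.add_sub_cancel] using this
        have hBnotω : b (i+1) ∉ ω i := by
          intro hB; have := hωM i hi _ hB; omega
        have hABne : a (i+1) ≠ b (i+1) := by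
          intro h; exact hBnotω (h ▸ ha1)
        have hbMx : b (i+1) ≤ Mx (i+1) := (hleMx (by omega) (le_refl (i+1))).2
        have hBS : b (i+1) ∈ Finset.Icc 1 S :=
          Finset.mem_Icc.2 ⟨by omega, le_trans hbMx (hMS (i+1) hin)⟩
        by_cases hjB : j = b (i+1)
        · subst hjB
          rw [(htriple.1 hs1).2]
          have hc : ∀ ℓ ∈ Finset.Icc 1 S, ((Qc (i+1) (b (i+1)) ℓ : ℤ) : ℝ) • k ℓ =
              if ℓ = b (i+1) then k ℓ else 0 := by
            intro ℓ _
            rw [hQ1, if_pos rfl]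
            by_cases hcc : ℓ = b (i+1) <;> simp [hcc]
          rw [Finset.sum_congr rfl hc, Finset.sum_ite_eq' (Finset.Icc 1 S) (b (i+1)) k,
            if_pos hBS]
        · by_cases hjA : j = a (i+1)
          · subst hjA
            rw [(htriple.1 hs1).1, ihl hi (a (i+1)) hj]
            have hc : ∀ ℓ ∈ Finset.Icc 1 S, ((Qc (i+1) (a (i+1)) ℓ : ℤ) : ℝ) • k ℓ =
                ((Qc i (a (i+1)) ℓ : ℤ) : ℝ) • k ℓ - (if ℓ = b (i+1) then k ℓ else 0) := by
              intro ℓ _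
              rw [hQ1, if_neg hABne, if_pos rfl]
              by_cases hcc : ℓ = b (i+1)
              · rw [if_pos hcc, if_pos hcc]
                push_cast
                rw [sub_smul, one_smul]
              · rw [if_neg hcc, if_neg hcc]
                push_cast
                rw [sub_zero, sub_zero]
            rw [Finset.sum_congr rfl hc, Finset.sum_sub_distrib,
              Finset.sum_ite_eq' (Finset.Icc 1 S) (b (i+1)) k, if_pos hBS]
          · rw [htriple.2.2 j hj hjA hjB, ihl hi j hj]
            apply Finset.sum_congr rfl
            intro ℓ _
            rw [hQ1, if_neg hjB, if_neg hjA]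
      · have hQ2 : ∀ j ℓ, Qc (i+1) j ℓ =
            if j = b (i+1) then 0
            else if j = a (i+1) then Qc i j ℓ + Qc i (b (i+1)) ℓ
            else Qc i j ℓ := by
          intro j ℓ; rw [hQc, Stmt16Aux.Q_succ, if_neg (by rw [hs2]; decide)]
        have hb2 : b (i+1) ∈ ω i := by
          have := (hannih _ hmem hs2).2.1; simpa [Nat.add_sub_cancel] using this
        have hba : b (i+1) ≠ a (i+1) := (hannih _ hmem hs2).2.2.1
        have hbS : b (i+1) ≤ S := le_trans (hωM i hi _ hb2) (hMS i hi)
        by_cases hjB : j = b (i+1)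
        · subst hjB
          rw [(htriple.2.1 hs2).2]
          symm
          apply Finset.sum_eq_zero
          intro ℓ _
          rw [hQ2, if_pos rfl]
          simp
        · by_cases hjA : j = a (i+1)
          · subst hjA
            rw [(htriple.2.1 hs2).1, ihl hi (a (i+1)) hj, ihl hi (b (i+1)) hbS,
              ← Finset.sum_add_distrib]
            apply Finset.sum_congr rfl
            intro ℓ _
            rw [hQ2, if_neg (Ne.symm hba), if_pos rfl]
            push_cast
            rw [add_smul]
          · rw [htriple.2.2 j hj hjA hjB, ihl hi j hj]
            apply Finset.sum_congr rfl
            intro ℓ _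
            rw [hQ2, if_neg hjB, if_neg hjA]
  -- assemble the sign and coefficient functions
  have hkey : ∀ i ≤ n, ∀ j ℓ,
      ((if ∃ i', i' ≤ n ∧ Qc i' j ℓ = -1 then (-1 : ℤ) else 1) *
        ((((if Qc i j ℓ = 0 then 0 else 1) : ℕ)) : ℤ)) = Qc i j ℓ := by
    intro i hi j ℓ
    rcases hrange i hi j ℓ with h0 | h1 | hm1
    · simp [h0]
    · have hne : ¬ ∃ i', i' ≤ n ∧ Qc i' j ℓ = -1 := by
        rintro ⟨i', hi', h'⟩
        exact hnosign j ℓ i hi i' hi' h1 h'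
      rw [if_neg hne, if_neg (by rw [h1]; norm_num : ¬ Qc i j ℓ = 0), h1]
      norm_num
    · rw [if_pos ⟨i, hi, hm1⟩, if_neg (by rw [hm1]; norm_num : ¬ Qc i j ℓ = 0), hm1]
      norm_num
  refine ⟨fun j ℓ => if ∃ i', i' ≤ n ∧ Qc i' j ℓ = -1 then -1 else 1,
    fun i j ℓ => if Qc i j ℓ = 0 then 0 else 1, ?_, ?_, ?_⟩
  · intro j ℓ
    by_cases h : ∃ i', i' ≤ n ∧ Qc i' j ℓ = -1
    · simp [h]
    · simp [h]
  · intro i j ℓ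
    by_cases h : Qc i j ℓ = 0 <;> simp [h]
  · intro k i hi j hj
    rw [hlin k i hi j hj]
    refine Finset.sum_congr rfl fun ℓ _ => ?_
    show ((Qc i j ℓ : ℤ) : ℝ) • k ℓ =
      (((if ∃ i', i' ≤ n ∧ Qc i' j ℓ = -1 then (-1 : ℤ) else 1) *
        ((((if Qc i j ℓ = 0 then 0 else 1) : ℕ)) : ℤ) : ℤ) : ℝ) • k ℓ
    rw [hkey i hi j ℓ]
end

section
/- Let n ≥ 1 and (s₁, …, s_n) ∈ {+1, −1}^n. Suppose there exist an integer r ≥ 1 and indices 1 = α₁ < β₁ < α₂ < β₂ < ⋯ < α_r < β_r < α_{r+1} = n+1 such that for each 1 ≤ u ≤ r the block (s_{α_u}, …, s_{β_u}) is a tent, and s_i = −1 for every i with β_u < i < α_{u+1} for some 1 ≤ u ≤ r. Set m := −Σ_{i=1}^n s_i, let T₀ (respectively T₁) be the number of indices u with Σ_{i=α_u}^{β_u} s_i = 0 (respectively = −1), and let D := Σ_{u=1}^r (α_{u+1} − β_u − 1) be the total number of positions outside the tents. Then m = T₁ + D ≥ 0 and T₀ + T₁ + D ≤ n/4 + 3m/4.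 -/
/-- A finite `±1`-sequence is a *tent* if it belongs to the smallest collection of such
sequences that (i) contains `(1, −1, −1)`, (ii) contains every sequence of length at
least 3 with entries in `{±1}`, total sum 0 and all proper initial partial sums strictly
positive, and (iii) is closed under prepending `(1, −1)`. -/
inductive IsTent : List ℤ → Prop
  | base : IsTent [1, -1, -1]
  | peak (l : List ℤ) (hlen : 3 ≤ l.length)
      (hmem : ∀ x ∈ l, x = 1 ∨ x = -1) (hsum : l.sum = 0)
      (hpos : ∀ j, 0 < j → j < l.length → 0 < (l.take j).sum) :
      IsTent l
  | step (l : List ℤ) (h : IsTent l) : IsTent (1 :: -1 :: l)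

lemma even_sum_add_length (l : List ℤ) (h : ∀ x ∈ l, x = 1 ∨ x = -1) :
    (l.sum + l.length) % 2 = 0 := by
  induction l with
  | nil => simp
  | cons a t ih =>
    have ha := h a (List.mem_cons_self (a := a) (l := t))
    have ht := ih fun x hx => h x (List.mem_cons_of_mem a hx)
    simp only [List.sum_cons, List.length_cons] at *
    push_cast at *
    omega

lemma tent_facts (l : List ℤ) (h : IsTent l) :
    (l.sum = 0 ∨ l.sum = -1) ∧ 3 ≤ l.length ∧ (l.sum = 0 → 4 ≤ l.length) := by
  induction h with
  | base => norm_num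
  | peak l hlen hmem hsum hpos =>
    refine ⟨Or.inl hsum, hlen, fun _ => ?_⟩
    have := even_sum_add_length l hmem
    rw [hsum] at this
    omega
  | step l h ih =>
    obtain ⟨h1, h2, h3⟩ := ih
    simp only [List.sum_cons, List.length_cons]
    refine ⟨by omega, by omega, fun h0 => by omega⟩

lemma sum_map_range' (f : ℕ → ℤ) (a : ℕ) : ∀ k, ((List.range' a k).map f).sum = ∑ i ∈ Finset.Ico a (a + k), f i := by
  intro k
  induction k with
  | zero => simp
  | succ k ih =>
    rw [List.range'_concat, List.map_append, List.sum_append, ih]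
    have h : a + (k + 1) = (a + k) + 1 := by omega
    rw [h, Finset.sum_Ico_succ_top (by omega)]
    simp

/-- Counting bound for a decomposition of a `±1`-sequence into tents separated by down
steps: with `m = −Σ s_i`, `T₀`/`T₁` the numbers of tents of sum `0`/`−1`, and `D` the
number of down steps outside tents, one has `m = T₁ + D ≥ 0` and
`T₀ + T₁ + D ≤ n/4 + 3m/4`. -/
theorem stmt18 (n r : ℕ) (hn : 1 ≤ n) (hr : 1 ≤ r)
    (s : ℕ → ℤ) (hs : ∀ i ∈ Finset.Icc 1 n, s i = 1 ∨ s i = -1)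
    (α β : ℕ → ℕ)
    (hα1 : α 1 = 1) (hαlast : α (r + 1) = n + 1)
    (hord : ∀ u ∈ Finset.Icc 1 r, α u < β u ∧ β u < α (u + 1))
    (htent : ∀ u ∈ Finset.Icc 1 r,
      IsTent ((List.range' (α u) (β u + 1 - α u)).map s))
    (hdown : ∀ u ∈ Finset.Icc 1 r, ∀ i, β u < i → i < α (u + 1) → s i = -1) :
    -(∑ i ∈ Finset.Icc 1 n, s i)
        = ((((Finset.Icc 1 r).filter fun u =>
              ∑ i ∈ Finset.Icc (α u) (β u), s i = -1).card : ℕ) : ℤ)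
          + ((∑ u ∈ Finset.Icc 1 r, (α (u + 1) - β u - 1) : ℕ) : ℤ) ∧
    (0 : ℤ) ≤ -(∑ i ∈ Finset.Icc 1 n, s i) ∧
    ((((Finset.Icc 1 r).filter fun u =>
            ∑ i ∈ Finset.Icc (α u) (β u), s i = 0).card
        + ((Finset.Icc 1 r).filter fun u =>
            ∑ i ∈ Finset.Icc (α u) (β u), s i = -1).card
        + ∑ u ∈ Finset.Icc 1 r, (α (u + 1) - β u - 1) : ℕ) : ℝ)
      ≤ (n : ℝ) / 4 + 3 * ((-(∑ i ∈ Finset.Icc 1 n, s i) : ℤ) : ℝ) / 4 := by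
  classical
  -- positivity of α on the relevant range
  have hαpos : ∀ u, u ≤ r + 1 → 1 ≤ u → 1 ≤ α u := by
    intro u
    induction u with
    | zero => omega
    | succ v ih =>
      intro hle _
      rcases Nat.eq_zero_or_pos v with rfl | hv
      · exact hα1.ge
      · have h1 := hord v (Finset.mem_Icc.mpr ⟨hv, by omega⟩)
        have h2 := ih (by omega) hv
        omega
  -- block sums equal tent sums
  have hblock : ∀ u ∈ Finset.Icc 1 r,
      ((List.range' (α u) (β u + 1 - α u)).map s).sum
        = ∑ i ∈ Finset.Icc (α u) (β u), s i := by
    intro u hu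
    have h := hord u hu
    rw [sum_map_range']
    have h2 : α u + (β u + 1 - α u) = β u + 1 := by omega
    rw [h2, Finset.Ico_add_one_right_eq_Icc]
  -- per-block facts
  have hb : ∀ u ∈ Finset.Icc 1 r,
      ((∑ i ∈ Finset.Icc (α u) (β u), s i = 0 ∨ ∑ i ∈ Finset.Icc (α u) (β u), s i = -1)
        ∧ 3 ≤ β u + 1 - α u
        ∧ (∑ i ∈ Finset.Icc (α u) (β u), s i = 0 → 4 ≤ β u + 1 - α u)) := by
    intro u hu
    have ht := tent_facts _ (htent u hu)
    rw [hblock u hu, List.length_map, List.length_range'] at ht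
    exact ht
  -- gap sums
  have hgap : ∀ u ∈ Finset.Icc 1 r,
      ∑ i ∈ Finset.Ioc (β u) (α (u + 1) - 1), s i
        = -((α (u + 1) - 1 - β u : ℕ) : ℤ) := by
    intro u hu
    have h := hord u hu
    calc ∑ i ∈ Finset.Ioc (β u) (α (u + 1) - 1), s i
        = ∑ _i ∈ Finset.Ioc (β u) (α (u + 1) - 1), (-1 : ℤ) :=
          Finset.sum_congr rfl (fun i hi => by
            rw [Finset.mem_Ioc] at hi
            exact hdown u hu i hi.1 (by omega))
      _ = -((α (u + 1) - 1 - β u : ℕ) : ℤ) := by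
          rw [Finset.sum_const, Nat.card_Ioc]
          simp
  -- the key telescoping identity
  have key : ∀ k, k ≤ r →
      (∑ i ∈ Finset.Ioc 0 (α (k + 1) - 1), s i)
        = (∑ u ∈ Finset.Icc 1 k,
            ((∑ i ∈ Finset.Icc (α u) (β u), s i)
              + ∑ i ∈ Finset.Ioc (β u) (α (u + 1) - 1), s i))
      ∧ α (k + 1) - 1
        = ∑ u ∈ Finset.Icc 1 k, ((β u + 1 - α u) + (α (u + 1) - 1 - β u)) := by
    intro k
    induction k with
    | zero => intro _; simp [hα1]
    | succ k ih =>
      intro hk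
      obtain ⟨ih1, ih2⟩ := ih (by omega)
      have hu : k + 1 ∈ Finset.Icc 1 r := Finset.mem_Icc.mpr ⟨by omega, hk⟩
      have h1 := hord (k + 1) hu
      have hp1 : 1 ≤ α (k + 1) := hαpos _ (by omega) (by omega)
      have e1 : (∑ i ∈ Finset.Ioc 0 (α (k + 1) - 1), s i)
            + ∑ i ∈ Finset.Ioc (α (k + 1) - 1) (β (k + 1)), s i
          = ∑ i ∈ Finset.Ioc 0 (β (k + 1)), s i :=
        Finset.sum_Ioc_consecutive _ (by omega) (by omega)
      have e2 : (∑ i ∈ Finset.Ioc 0 (β (k + 1)), s i)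
            + ∑ i ∈ Finset.Ioc (β (k + 1)) (α (k + 1 + 1) - 1), s i
          = ∑ i ∈ Finset.Ioc 0 (α (k + 1 + 1) - 1), s i :=
        Finset.sum_Ioc_consecutive _ (by omega) (by omega)
      have e3 : Finset.Ioc (α (k + 1) - 1) (β (k + 1))
          = Finset.Icc (α (k + 1)) (β (k + 1)) := by
        ext x
        simp only [Finset.mem_Ioc, Finset.mem_Icc]
        omega
      rw [Finset.sum_Icc_succ_top (by omega : 1 ≤ k + 1),
          Finset.sum_Icc_succ_top (by omega : 1 ≤ k + 1), ← ih1, ← ih2]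
      constructor
      · rw [← e2, ← e1, e3]; ring
      · omega
  obtain ⟨hsum_eq, hlen_eq⟩ := key r le_rfl
  rw [hαlast] at hsum_eq hlen_eq
  have hnn : n + 1 - 1 = n := rfl
  rw [hnn] at hsum_eq hlen_eq
  -- abbreviations
  set T0 := ((Finset.Icc 1 r).filter fun u =>
      ∑ i ∈ Finset.Icc (α u) (β u), s i = 0).card with hT0
  set T1 := ((Finset.Icc 1 r).filter fun u =>
      ∑ i ∈ Finset.Icc (α u) (β u), s i = -1).card with hT1
  set Dn := ∑ u ∈ Finset.Icc 1 r, (α (u + 1) - β u - 1) with hDn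
  -- the two D-sums agree
  have hD : (∑ u ∈ Finset.Icc 1 r, (α (u + 1) - β u - 1))
      = ∑ u ∈ Finset.Icc 1 r, (α (u + 1) - 1 - β u) :=
    Finset.sum_congr rfl (fun u _ => by omega)
  -- filter complement identification
  have hfilter : ((Finset.Icc 1 r).filter fun u =>
        ¬ (∑ i ∈ Finset.Icc (α u) (β u), s i = 0))
      = (Finset.Icc 1 r).filter fun u =>
        ∑ i ∈ Finset.Icc (α u) (β u), s i = -1 := by
    apply Finset.filter_congr
    intro u hu
    have := (hb u hu).1
    omega
  -- sum of block sums
  have hbsum : (∑ u ∈ Finset.Icc 1 r, ∑ i ∈ Finset.Icc (α u) (β u), s i)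
      = -(T1 : ℤ) := by
    rw [← Finset.sum_filter_add_sum_filter_not (Finset.Icc 1 r)
        (fun u => ∑ i ∈ Finset.Icc (α u) (β u), s i = 0)]
    rw [Finset.sum_eq_zero (fun u hu => (Finset.mem_filter.mp hu).2), hfilter]
    rw [Finset.sum_congr rfl (fun u hu => (Finset.mem_filter.mp hu).2),
        Finset.sum_const]
    simp [hT1]
  -- total sum identity (in ℤ)
  have hIcc : Finset.Icc 1 n = Finset.Ioc 0 n := by
    rw [← Finset.Icc_add_one_left_eq_Ioc, zero_add]
  have htotal : -(∑ i ∈ Finset.Icc 1 n, s i)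
      = (T1 : ℤ) + ((∑ u ∈ Finset.Icc 1 r, (α (u + 1) - β u - 1) : ℕ) : ℤ) := by
    rw [hIcc, hsum_eq, Finset.sum_add_distrib, hbsum,
        Finset.sum_congr rfl (fun u hu => hgap u hu), hD]
    rw [Finset.sum_neg_distrib]
    push_cast
    ring
  refine ⟨htotal, by rw [htotal]; positivity, ?_⟩
  -- length lower bound
  have hL : 4 * T0 + 3 * T1 ≤ ∑ u ∈ Finset.Icc 1 r, (β u + 1 - α u) := by
    rw [← Finset.sum_filter_add_sum_filter_not (Finset.Icc 1 r)
        (fun u => ∑ i ∈ Finset.Icc (α u) (β u), s i = 0), hfilter]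
    have h0 : 4 * T0 ≤ ∑ u ∈ (Finset.Icc 1 r).filter
        (fun u => ∑ i ∈ Finset.Icc (α u) (β u), s i = 0), (β u + 1 - α u) := by
      have := Finset.card_nsmul_le_sum ((Finset.Icc 1 r).filter
          (fun u => ∑ i ∈ Finset.Icc (α u) (β u), s i = 0))
          (fun u => β u + 1 - α u) 4 (fun u hu => by
        have hm := Finset.mem_filter.mp hu
        exact (hb u hm.1).2.2 hm.2)
      simpa [smul_eq_mul, mul_comm] using this
    have h1 : 3 * T1 ≤ ∑ u ∈ (Finset.Icc 1 r).filter
        (fun u => ∑ i ∈ Finset.Icc (α u) (β u), s i = -1), (β u + 1 - α u) := by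
      have := Finset.card_nsmul_le_sum ((Finset.Icc 1 r).filter
          (fun u => ∑ i ∈ Finset.Icc (α u) (β u), s i = -1))
          (fun u => β u + 1 - α u) 3 (fun u hu => by
        have hm := Finset.mem_filter.mp hu
        exact (hb u hm.1).2.1)
      simpa [smul_eq_mul, mul_comm] using this
    omega
  -- the main natural-number inequality
  have hkey : 4 * (T0 + T1 + ∑ u ∈ Finset.Icc 1 r, (α (u + 1) - β u - 1))
      ≤ n + 3 * (T1 + ∑ u ∈ Finset.Icc 1 r, (α (u + 1) - β u - 1)) := by
    have hlen2 : n = (∑ u ∈ Finset.Icc 1 r, (β u + 1 - α u))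
        + ∑ u ∈ Finset.Icc 1 r, (α (u + 1) - β u - 1) := by
      rw [hD, hlen_eq, Finset.sum_add_distrib]
    omega
  rw [htotal, ← hDn]
  have hkeyR : (4 : ℝ) * ((T0 : ℝ) + T1 + Dn) ≤ (n : ℝ) + 3 * ((T1 : ℝ) + Dn) := by
    exact_mod_cast hkey
  push_cast
  linarith
end

section
/- Let (E, μ) be a probability space and m ≥ 0 an integer. For 0 ≤ j ≤ m let f_j : E^{j+1} → ℝ be bounded measurable functions such that: (i) each f_j(z₀, z₁, …, z_j) is symmetric under permutations of its last j arguments z₁, …, z_j, and (ii) for all 0 ≤ j < m, ∫_E f_{j+1}(z₀, …, z_j, z) dμ(z) = f_j(z₀, …, z_j) for μ^{⊗(j+1)}-almost every (z₀, …, z_j). Define the m-th order correlation function G_m : E^{m+1} → ℝ by G_m(z₀, z₁, …, z_m) = Σ_{j=0}^m (−1)^{m−j} Σ_{σ ⊆ {1,…,m}, |σ| = j} f_j(z₀, z_σ), where for σ = {i₁ < ⋯ < i_j} we write z_σ = (z_{i₁}, …, z_{i_j}). Then for every 1 ≤ ℓ ≤ m: ∫_E G_m(z₀, …, z_m) dμ(z_ℓ)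 = 0 for μ^{⊗m}-almost every (z₀, …, z_{ℓ−1}, z_{ℓ+1}, …, z_m). -/
open MeasureTheory

lemma mapPiAux {E : Type*} [MeasurableSpace E] (μ : Measure E) [IsProbabilityMeasure μ]
    {j m : ℕ} (g : Fin j → Fin m) (hg : Function.Injective g) :
    MeasurePreserving (fun y : Fin m → E => y ∘ g)
      (Measure.pi fun _ : Fin m => μ) (Measure.pi fun _ : Fin j => μ) := by
  classical
  have hmeas : Measurable (fun y : Fin m → E => y ∘ g) :=
    measurable_pi_lambda _ fun t => measurable_pi_apply _
  refine ⟨hmeas, ?_⟩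
  refine (Measure.pi_eq fun s hs => ?_).symm
  set s' : Fin m → Set E := fun i => ⋂ (t : Fin j) (_ : g t = i), s t with hs'
  have hpre : (fun y : Fin m → E => y ∘ g) ⁻¹' Set.pi Set.univ s = Set.pi Set.univ s' := by
    ext y
    simp only [Set.mem_preimage, Set.mem_pi, Set.mem_univ, forall_true_left, hs',
      Set.mem_iInter, Function.comp]
    constructor
    · rintro h i t rfl; exact h t
    · intro h t; exact h (g t) t rfl
  have hs'meas : ∀ i, MeasurableSet (s' i) := fun i =>
    MeasurableSet.iInter fun t => MeasurableSet.iInter fun _ => hs t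
  rw [Measure.map_apply hmeas (MeasurableSet.univ_pi hs), hpre, Measure.pi_pi]
  have key : ∀ t : Fin j, s' (g t) = s t := by
    intro t
    apply subset_antisymm
    · intro x hx
      simp only [hs', Set.mem_iInter] at hx
      exact hx t rfl
    · intro x hx
      simp only [hs', Set.mem_iInter]
      intro t' ht'
      rwa [hg ht']
  have huniv : ∀ i : Fin m, i ∉ Finset.univ.image g → s' i = Set.univ := by
    intro i hi
    simp only [Finset.mem_image, Finset.mem_univ, true_and] at hi
    push_neg at hi
    simp only [hs']
    rw [Set.iInter_eq_univ]
    intro t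
    rw [Set.iInter_eq_univ]
    intro ht; exact absurd ht (hi t)
  rw [← Finset.prod_subset (Finset.subset_univ (Finset.univ.image g))
      (fun i _ hi => by rw [huniv i hi, measure_univ]),
    Finset.prod_image (fun a _ b _ h => hg h)]
  exact Finset.prod_congr rfl fun t _ => by rw [key t]

/-- Orthogonality of correlation functions (cumulants): if `(f_j)` is a compatible,
bounded, measurable family of symmetric relative densities on a probability space
`(E, μ)`, then the `m`-th order cumulant
`G_m(z₀,…,z_m) = Σ_{σ ⊆ {1,…,m}} (−1)^{m−|σ|} f_{|σ|}(z₀, z_σ)` integrates to zero in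
each of its last `m` variables, almost everywhere in the remaining ones. -/
theorem stmt19 {E : Type*} [MeasurableSpace E] (μ : Measure E) [IsProbabilityMeasure μ]
    (m : ℕ) (f : (j : ℕ) → E → (Fin j → E) → ℝ)
    (hmeas : ∀ j ≤ m, Measurable fun p : E × (Fin j → E) => f j p.1 p.2)
    (hbdd : ∀ j ≤ m, ∃ C : ℝ, ∀ z₀ y, |f j z₀ y| ≤ C)
    (hsymm : ∀ j ≤ m, ∀ π : Equiv.Perm (Fin j), ∀ z₀ y, f j z₀ (y ∘ π) = f j z₀ y)
    (hconsist : ∀ j < m, ∀ᵐ p ∂(μ.prod (Measure.pi fun _ : Fin j => μ)),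
      ∫ z, f (j + 1) p.1 (Fin.snoc p.2 z) ∂μ = f j p.1 p.2)
    (ℓ : Fin m) :
    ∀ᵐ p ∂(μ.prod (Measure.pi fun _ : Fin m => μ)),
      ∫ w, (∑ σ : Finset (Fin m), (-1 : ℝ) ^ (m - σ.card) *
          f σ.card p.1 fun t : Fin σ.card =>
            Function.update p.2 ℓ w ((σ.orderIsoOfFin rfl t : Fin m))) ∂μ = 0 := by
  classical
  -- cardinality facts
  have hcardle : ∀ σ : Finset (Fin m), σ.card ≤ m := by
    intro σ
    simpa using Finset.card_le_univ σ
  -- cast lemma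
  have cast1 : ∀ (σ : Finset (Fin m)) (k : ℕ) (hk : σ.card = k) (z₀ : E) (F : Fin m → E),
      f σ.card z₀ (fun t => F ((σ.orderIsoOfFin rfl t : Fin m)))
        = f k z₀ (fun t => F ((σ.orderIsoOfFin hk t : Fin m))) := by
    intro σ k hk
    subst hk
    intro z₀ F
    rfl
  -- the key a.e. identity for sets containing ℓ
  have key : ∀ τ : Finset (Fin m), ℓ ∉ τ →
      ∀ᵐ p ∂(μ.prod (Measure.pi fun _ : Fin m => μ)),
        ∫ w, f (insert ℓ τ).card p.1
            (fun t : Fin (insert ℓ τ).card =>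
              Function.update p.2 ℓ w (((insert ℓ τ).orderIsoOfFin rfl t : Fin m))) ∂μ
          = f τ.card p.1 (fun t : Fin τ.card => p.2 ((τ.orderIsoOfFin rfl t : Fin m))) := by
    intro τ hτ
    have hjm : τ.card < m := by
      have h1 : τ ⊂ Finset.univ :=
        Finset.ssubset_univ_iff.2 fun h => hτ (h ▸ Finset.mem_univ ℓ)
      simpa using Finset.card_lt_card h1
    have hcardi : (insert ℓ τ).card = τ.card + 1 := Finset.card_insert_of_notMem hτ
    set oIso := (insert ℓ τ).orderIsoOfFin hcardi with hoIso
    set g : Fin (τ.card + 1) → Fin m := fun t => ↑(oIso t) with hgdef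
    have hg : Function.Injective g := fun a b hab => oIso.injective (Subtype.ext hab)
    set t₀ : Fin (τ.card + 1) := oIso.symm ⟨ℓ, Finset.mem_insert_self ℓ τ⟩ with ht₀
    have hgt₀ : g t₀ = ℓ := by
      simp [hgdef, ht₀]
    set h : Fin τ.card → Fin m := fun s => g (t₀.succAbove s) with hhdef
    have hh : Function.Injective h := hg.comp Fin.succAbove_right_injective
    have hmemg : ∀ t, g t ∈ insert ℓ τ := fun t => (oIso t).2
    have hrangeτ : ∀ s, h s ∈ τ := by
      intro s
      have h1 : h s ∈ insert ℓ τ := hmemg _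
      have h2 : h s ≠ ℓ := fun e => Fin.succAbove_ne t₀ s (hg (e.trans hgt₀.symm))
      rcases Finset.mem_insert.1 h1 with h3 | h3
      · exact absurd h3 h2
      · exact h3
    set embτ : Fin τ.card → Fin m := fun s => ↑(τ.orderIsoOfFin rfl s) with hembdef
    have hembinj : Function.Injective embτ :=
      fun a b hab => (τ.orderIsoOfFin rfl).injective (Subtype.ext hab)
    have hrangeeq : Set.range h = Set.range embτ := by
      have h2 : Set.range embτ = ↑τ := by
        have he : embτ = fun s => τ.orderEmbOfFin rfl s :=
          funext fun s => Finset.coe_orderIsoOfFin_apply τ rfl s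
        rw [he]
        exact Finset.range_orderEmbOfFin τ rfl
      have h1 : Set.range h = ↑τ := by
        apply subset_antisymm
        · rintro _ ⟨s, rfl⟩
          exact hrangeτ s
        · intro i hi
          have hins : i ∈ insert ℓ τ := Finset.mem_insert_of_mem hi
          set t := oIso.symm ⟨i, hins⟩ with htdef
          have hgt : g t = i := by simp [hgdef, htdef]
          have htne : t ≠ t₀ := by
            intro e
            have : i = ℓ := by rw [← hgt, e, hgt₀]
            exact hτ (this ▸ hi)
          obtain ⟨s, hs⟩ := Fin.exists_succAbove_eq htne
          exact ⟨s, by rw [hhdef]; simp only []; rw [hs, hgt]⟩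
      rw [h1, h2]
    set π' : Equiv.Perm (Fin τ.card) :=
      (Equiv.ofInjective h hh).trans
        ((Equiv.setCongr hrangeeq).trans (Equiv.ofInjective embτ hembinj).symm) with hπ'def
    have hπ' : ∀ s, embτ (π' s) = h s := by
      intro s
      simp only [hπ'def, Equiv.trans_apply, Equiv.setCongr_apply]
      exact Equiv.apply_ofInjective_symm hembinj _
    have hmp := (MeasurePreserving.id μ).prod (mapPiAux μ h hh)
    have hae := hmp.quasiMeasurePreserving.ae (hconsist τ.card hjm)
    have integrand_eq : ∀ (z₀ : E) (z : Fin m → E) (w : E),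
        f (insert ℓ τ).card z₀
            (fun t : Fin (insert ℓ τ).card =>
              Function.update z ℓ w (((insert ℓ τ).orderIsoOfFin rfl t : Fin m)))
          = f (τ.card + 1) z₀ (Fin.snoc (fun s => z (h s)) w) := by
      intro z₀ z w
      rw [cast1 _ _ hcardi]
      rw [← hsymm (τ.card + 1) hjm
        ((finSuccEquiv' t₀).trans (finSuccEquiv' (Fin.last τ.card)).symm) z₀
        (Fin.snoc (fun s => z (h s)) w)]
      congr 1
      funext t
      rcases eq_or_ne t t₀ with rfl | hne
      · have h5 : ((oIso t₀ : Fin m)) = ℓ := hgt₀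
        simp [Function.comp]
        rw [← Finset.coe_orderIsoOfFin_apply, h5, Function.update_self]
      · obtain ⟨s, rfl⟩ := Fin.exists_succAbove_eq hne
        have hne' : g (t₀.succAbove s) ≠ ℓ :=
          fun e => Fin.succAbove_ne t₀ s (hg (e.trans hgt₀.symm))
        simp [Function.comp]
        rw [← Finset.coe_orderIsoOfFin_apply]
        exact Function.update_of_ne hne' _ _
    filter_upwards [hae] with p hpp
    have heq1 : (fun w => f (insert ℓ τ).card p.1
        (fun t : Fin (insert ℓ τ).card =>
          Function.update p.2 ℓ w (((insert ℓ τ).orderIsoOfFin rfl t : Fin m))))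
        = fun w => f (τ.card + 1) p.1 (Fin.snoc (fun s => p.2 (h s)) w) :=
      funext (integrand_eq p.1 p.2)
    rw [heq1]
    have hpp' : ∫ w, f (τ.card + 1) p.1 (Fin.snoc (fun s => p.2 (h s)) w) ∂μ
        = f τ.card p.1 (fun s => p.2 (h s)) := by
      simpa [Prod.map, Function.comp_def] using hpp
    rw [hpp']
    rw [← hsymm τ.card hjm.le π' p.1 (fun t => p.2 (embτ t))]
    congr 1
    funext s
    simp only [Function.comp_apply]
    rw [hπ' s]
  -- integrability of each summand
  have hint : ∀ (σ : Finset (Fin m)) (p : E × (Fin m → E)),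
      Integrable (fun w => f σ.card p.1
        (fun t : Fin σ.card => Function.update p.2 ℓ w ((σ.orderIsoOfFin rfl t : Fin m)))) μ := by
    intro σ p
    obtain ⟨C, hC⟩ := hbdd σ.card (hcardle σ)
    have hm1 : Measurable fun w : E =>
        ((p.1, fun t : Fin σ.card => Function.update p.2 ℓ w ((σ.orderIsoOfFin rfl t : Fin m)))
          : E × (Fin σ.card → E)) := by
      refine measurable_const.prodMk (measurable_pi_lambda _ fun t => ?_)
      simp only [Function.update_apply]
      exact Measurable.ite (MeasurableSet.const _) measurable_id measurable_const
    refine ⟨((hmeas σ.card (hcardle σ)).comp hm1).aestronglyMeasurable, ?_⟩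
    refine HasFiniteIntegral.of_bounded (C := C) (ae_of_all _ fun w => ?_)
    simpa [Real.norm_eq_abs] using hC _ _
  -- combine the a.e. facts over all τ
  have keyall : ∀ᵐ p ∂(μ.prod (Measure.pi fun _ : Fin m => μ)),
      ∀ τ : Finset (Fin m), ℓ ∉ τ →
        ∫ w, f (insert ℓ τ).card p.1
            (fun t : Fin (insert ℓ τ).card =>
              Function.update p.2 ℓ w (((insert ℓ τ).orderIsoOfFin rfl t : Fin m))) ∂μ
          = f τ.card p.1 (fun t : Fin τ.card => p.2 ((τ.orderIsoOfFin rfl t : Fin m))) := by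
    rw [ae_all_iff]
    intro τ
    by_cases hτ : ℓ ∉ τ
    · exact (key τ hτ).mono fun p hp _ => hp
    · exact ae_of_all _ fun p hp => absurd hp hτ
  filter_upwards [keyall] with p hp
  rw [integral_finset_sum _ (fun σ _ => ((hint σ p).const_mul _))]
  -- split the sum according to membership of ℓ
  rw [← Finset.sum_filter_add_sum_filter_not Finset.univ (fun σ : Finset (Fin m) => ℓ ∈ σ)]
  have hbij : ∑ σ ∈ Finset.univ.filter (fun σ : Finset (Fin m) => ℓ ∈ σ),
        ∫ w, (-1 : ℝ) ^ (m - σ.card) * f σ.card p.1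
          (fun t : Fin σ.card => Function.update p.2 ℓ w ((σ.orderIsoOfFin rfl t : Fin m))) ∂μ
      = ∑ τ ∈ Finset.univ.filter (fun σ : Finset (Fin m) => ¬ ℓ ∈ σ),
        ∫ w, (-1 : ℝ) ^ (m - (insert ℓ τ).card) * f (insert ℓ τ).card p.1
          (fun t : Fin (insert ℓ τ).card =>
            Function.update p.2 ℓ w (((insert ℓ τ).orderIsoOfFin rfl t : Fin m))) ∂μ := by
    refine Finset.sum_nbij' (fun σ => σ.erase ℓ) (fun τ => insert ℓ τ) ?_ ?_ ?_ ?_ ?_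
    · intro σ hσ
      simp [Finset.mem_filter] at hσ ⊢
    · intro τ hτ
      simp [Finset.mem_filter] at hτ ⊢
    · intro σ hσ
      simp only [Finset.mem_filter, Finset.mem_univ, true_and] at hσ
      exact Finset.insert_erase hσ
    · intro τ hτ
      simp only [Finset.mem_filter, Finset.mem_univ, true_and] at hτ
      exact Finset.erase_insert hτ
    · intro σ hσ
      simp only [Finset.mem_filter, Finset.mem_univ, true_and] at hσ
      rw [Finset.insert_erase hσ]
  rw [hbij, ← Finset.sum_add_distrib]
  refine Finset.sum_eq_zero fun τ hτ => ?_
  simp only [Finset.mem_filter, Finset.mem_univ, true_and] at hτ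
  have hττ : τ.card < m := by
    have h1 : τ ⊂ Finset.univ := by
      refine Finset.ssubset_univ_iff.2 fun h => hτ (h ▸ Finset.mem_univ ℓ)
    simpa using Finset.card_lt_card h1
  have hcardi : (insert ℓ τ).card = τ.card + 1 := Finset.card_insert_of_notMem hτ
  -- second term: integrand is constant in w
  have hconst : ∀ w : E, (fun t : Fin τ.card => Function.update p.2 ℓ w ((τ.orderIsoOfFin rfl t : Fin m)))
      = fun t : Fin τ.card => p.2 ((τ.orderIsoOfFin rfl t : Fin m)) := by
    intro w
    funext t
    refine Function.update_of_ne (fun h => hτ ?_) _ _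
    rw [← h]
    exact Finset.orderEmbOfFin_mem τ rfl t
  have e2 : ∫ w, (-1 : ℝ) ^ (m - τ.card) * f τ.card p.1
        (fun t : Fin τ.card => Function.update p.2 ℓ w ((τ.orderIsoOfFin rfl t : Fin m))) ∂μ
      = (-1 : ℝ) ^ (m - τ.card)
        * f τ.card p.1 (fun t : Fin τ.card => p.2 ((τ.orderIsoOfFin rfl t : Fin m))) := by
    have : (fun w => (-1 : ℝ) ^ (m - τ.card) * f τ.card p.1
        (fun t : Fin τ.card => Function.update p.2 ℓ w ((τ.orderIsoOfFin rfl t : Fin m))))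
        = fun _ : E => (-1 : ℝ) ^ (m - τ.card)
          * f τ.card p.1 (fun t : Fin τ.card => p.2 ((τ.orderIsoOfFin rfl t : Fin m))) := by
      funext w; rw [hconst w]
    rw [this, integral_const, probReal_univ]
    simp
  have e1 : ∫ w, (-1 : ℝ) ^ (m - (insert ℓ τ).card) * f (insert ℓ τ).card p.1
        (fun t : Fin (insert ℓ τ).card =>
          Function.update p.2 ℓ w (((insert ℓ τ).orderIsoOfFin rfl t : Fin m))) ∂μ
      = (-1 : ℝ) ^ (m - (τ.card + 1))
        * f τ.card p.1 (fun t : Fin τ.card => p.2 ((τ.orderIsoOfFin rfl t : Fin m))) := by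
    rw [integral_const_mul, hp τ hτ, hcardi]
  rw [e1, e2]
  have hms : m - τ.card = (m - (τ.card + 1)) + 1 := by omega
  rw [hms, pow_succ]
  ring
end
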